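/- arXiv:0704.3145 — 10 statements merged into one kernel-verified Lean document; each statement's English description precedes it below -/
import Mathlib

section
/- For integers d ≥ 1 and 0 ≤ q < d, the constant term of the Laurent expansion at t = 1 of the rational function (1/d) · Σ_{α^d = 1} α^{-q}/(1 - α t) equals (d - 1 - 2q)/(2d). -/
/-!
Subtracting the pole `(1 / d) / (1 - t)` of the root `α = 1` leaves a function continuous at
`t = 1`, so the constant term is `(1 / d) * S q` with `S q = ∑_{α ≠ 1} α⁻¹ ^ q / (1 - α)`.
Pairing `α` with `α⁻¹` and using `1 / (1 - α) + 1 / (1 - α⁻¹) = 1` gives `2 * S 0 = d - 1`.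
Since `α⁻¹ ^ (q + 1) / (1 - α) = α⁻¹ ^ q / (1 - α) + α⁻¹ ^ (q + 1)` and the powers
`α ^ m` with `d ∤ m` sum to `0` over all roots, hence to `-1` over `α ≠ 1`, each step lowers
`S` by one: `S q = (d - 1) / 2 - q` for `q < d`.
-/

open BigOperators Filter Polynomial Finset

variable {K : Type*} [Field K] {d : ℕ} {ζ : K}

theorem IsPrimitiveRoot.sum_pow_nthRootsFinset_one_eq_zero (hζ : IsPrimitiveRoot ζ d) {m : ℕ}
    (hm : ¬ d ∣ m) : ∑ α ∈ nthRootsFinset d (1 : K), α ^ m = 0 := by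
  rcases d.eq_zero_or_pos with rfl | hd
  · simp
  · -- multiplication by `ζ` permutes the `d`-th roots of unity
    have hscale : ζ ^ m * ∑ α ∈ nthRootsFinset d (1 : K), α ^ m
        = ∑ α ∈ nthRootsFinset d (1 : K), α ^ m := by
      rw [mul_sum]
      refine sum_equiv (Equiv.mulLeft₀ ζ (hζ.ne_zero hd.ne')) (fun α => ?_) (fun α _ => ?_)
      · simp [Polynomial.mem_nthRootsFinset hd, mul_pow, hζ.pow_eq_one]
      · simp [mul_pow]
    have hne : ζ ^ m ≠ 1 := fun h => hm ((hζ.pow_eq_one_iff_dvd m).1 h)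
    have := sub_eq_zero.2 hscale
    rw [← sub_one_mul, mul_eq_zero] at this
    exact this.resolve_left (sub_ne_zero.2 hne)

theorem inv_mem_erase_one_nthRootsFinset_iff [DecidableEq K] {α : K} :
    α⁻¹ ∈ (nthRootsFinset d (1 : K)).erase 1 ↔ α ∈ (nthRootsFinset d (1 : K)).erase 1 := by
  rcases d.eq_zero_or_pos with rfl | hd
  · simp
  · simp [mem_nthRootsFinset hd, inv_pow]

theorem sum_erase_one_nthRootsFinset_comp_inv [DecidableEq K] {M : Type*} [AddCommMonoid M]
    (f : K → M) :
    ∑ α ∈ (nthRootsFinset d (1 : K)).erase 1, f α⁻¹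
      = ∑ α ∈ (nthRootsFinset d (1 : K)).erase 1, f α :=
  sum_equiv (Equiv.inv K) (fun _ => inv_mem_erase_one_nthRootsFinset_iff.symm) (fun _ _ => rfl)

theorem IsPrimitiveRoot.sum_erase_one_nthRootsFinset_pow_eq_neg_one [DecidableEq K]
    (hζ : IsPrimitiveRoot ζ d) (hd : 0 < d) {m : ℕ} (hm : ¬ d ∣ m) :
    ∑ α ∈ (nthRootsFinset d (1 : K)).erase 1, α ^ m = -1 := by
  rw [sum_erase_eq_sub (one_mem_nthRootsFinset hd), hζ.sum_pow_nthRootsFinset_one_eq_zero hm,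
    one_pow, zero_sub]

theorem one_div_one_sub_add_one_div_one_sub_inv {α : K} (h0 : α ≠ 0) (h1 : α ≠ 1) :
    1 / (1 - α) + 1 / (1 - α⁻¹) = 1 := by
  have : 1 - α ≠ 0 := sub_ne_zero.2 h1.symm
  have : α - 1 ≠ 0 := sub_ne_zero.2 h1
  field_simp
  ring

theorem inv_pow_succ_div_one_sub {α : K} (h0 : α ≠ 0) (h1 : α ≠ 1) (q : ℕ) :
    α⁻¹ ^ (q + 1) / (1 - α) = α⁻¹ ^ q / (1 - α) + α⁻¹ ^ (q + 1) := by
  have : 1 - α ≠ 0 := sub_ne_zero.2 h1.symm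
  rw [pow_succ]
  field_simp
  ring

theorem ne_zero_and_ne_one_of_mem_erase_one_nthRootsFinset [DecidableEq K] {α : K}
    (hα : α ∈ (nthRootsFinset d (1 : K)).erase 1) : α ≠ 0 ∧ α ≠ 1 :=
  ⟨ne_zero_of_mem_nthRootsFinset one_ne_zero (mem_of_mem_erase hα), ne_of_mem_erase hα⟩

theorem IsPrimitiveRoot.two_mul_sum_one_div_one_sub [DecidableEq K] (hζ : IsPrimitiveRoot ζ d)
    (hd : 0 < d) :
    2 * ∑ α ∈ (nthRootsFinset d (1 : K)).erase 1, 1 / (1 - α) = d - 1 := by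
  calc 2 * ∑ α ∈ (nthRootsFinset d (1 : K)).erase 1, 1 / (1 - α)
      = ∑ α ∈ (nthRootsFinset d (1 : K)).erase 1, (1 / (1 - α) + 1 / (1 - α⁻¹)) := by
        rw [sum_add_distrib, sum_erase_one_nthRootsFinset_comp_inv (fun α => 1 / (1 - α))]
        ring
    _ = ∑ α ∈ (nthRootsFinset d (1 : K)).erase 1, 1 := sum_congr rfl fun α hα =>
        one_div_one_sub_add_one_div_one_sub_inv
          (ne_zero_and_ne_one_of_mem_erase_one_nthRootsFinset hα).1
          (ne_zero_and_ne_one_of_mem_erase_one_nthRootsFinset hα).2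
    _ = d - 1 := by
        rw [sum_const, card_erase_of_mem (one_mem_nthRootsFinset hd), hζ.card_nthRootsFinset,
          nsmul_one, Nat.cast_sub hd, Nat.cast_one]

theorem IsPrimitiveRoot.two_mul_sum_inv_pow_div_one_sub [DecidableEq K]
    (hζ : IsPrimitiveRoot ζ d) {q : ℕ} (hq : q < d) :
    2 * ∑ α ∈ (nthRootsFinset d (1 : K)).erase 1, α⁻¹ ^ q / (1 - α) = d - 1 - 2 * q := by
  induction q with
  | zero => simpa using hζ.two_mul_sum_one_div_one_sub hq
  | succ q ih =>
    have hstep : ∑ α ∈ (nthRootsFinset d (1 : K)).erase 1, α⁻¹ ^ (q + 1) / (1 - α)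
        = ∑ α ∈ (nthRootsFinset d (1 : K)).erase 1, α⁻¹ ^ q / (1 - α) - 1 := by
      rw [sum_congr rfl fun α hα => inv_pow_succ_div_one_sub
          (ne_zero_and_ne_one_of_mem_erase_one_nthRootsFinset hα).1
          (ne_zero_and_ne_one_of_mem_erase_one_nthRootsFinset hα).2 q,
        sum_add_distrib, sum_erase_one_nthRootsFinset_comp_inv (· ^ (q + 1)),
        hζ.sum_erase_one_nthRootsFinset_pow_eq_neg_one (by omega)
          (Nat.not_dvd_of_pos_of_lt q.succ_pos hq), sub_eq_add_neg]
    rw [hstep, mul_sub, ih (by omega)]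
    push_cast
    ring

theorem stmt1 (d q : ℕ) (hd : 1 ≤ d) (hq : q < d) :
    ∃ c : ℂ, Filter.Tendsto
      (fun t : ℂ =>
        (1 / (d : ℂ)) * ∑ α ∈ (Polynomial.nthRoots d (1 : ℂ)).toFinset,
            α⁻¹ ^ q / (1 - α * t)
          - c / (1 - t))
      (nhdsWithin 1 {(1 : ℂ)}ᶜ)
      (nhds (((d : ℂ) - 1 - 2 * q) / (2 * d))) := by
  refine ⟨1 / d, ?_⟩
  set T := (nthRootsFinset d (1 : ℂ)).erase 1
  have hζ := Complex.isPrimitiveRoot_exp d (by omega)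
  have hsplit : ∀ t : ℂ,
      (1 / (d : ℂ)) * ∑ α ∈ (nthRoots d (1 : ℂ)).toFinset, α⁻¹ ^ q / (1 - α * t) - 1 / d / (1 - t)
        = (1 / (d : ℂ)) * ∑ α ∈ T, α⁻¹ ^ q / (1 - α * t) := fun t => by
    rw [← nthRootsFinset_def, ← add_sum_erase _ _ (one_mem_nthRootsFinset (by omega))]
    simp only [inv_one, one_pow, one_mul]
    ring
  have hlim : Tendsto (fun t : ℂ => ∑ α ∈ T, α⁻¹ ^ q / (1 - α * t)) (nhds 1)
      (nhds (∑ α ∈ T, α⁻¹ ^ q / (1 - α))) := by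
    refine tendsto_finsetSum _ fun α hα => ?_
    have hα1 : 1 - α ≠ 0 := sub_ne_zero.2 (ne_of_mem_erase hα).symm
    exact tendsto_const_nhds.div
      ((by fun_prop : Continuous fun t : ℂ => 1 - α * t).tendsto' 1 (1 - α) (by ring)) hα1
  have hval : (1 / (d : ℂ)) * ∑ α ∈ T, α⁻¹ ^ q / (1 - α) = ((d : ℂ) - 1 - 2 * q) / (2 * d) := by
    rw [← hζ.two_mul_sum_inv_pow_div_one_sub hq, mul_div_mul_left _ _ two_ne_zero,
      one_div_mul_eq_div]
  rw [← hval]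
  exact ((hlim.const_mul _).mono_left nhdsWithin_le_nhds).congr fun t => (hsplit t).symm
end

section
/- Let F(t) = Σ_{i≥0} a_i t^i be a formal power series over ℂ, and suppose there exists a positive integer p and a polynomial P_p such that Σ_{i=0}^{pn-1} a_i = P_p(n) for all positive integers n. If q is another positive integer with a polynomial P_q satisfying Σ_{i=0}^{qn-1} a_i = P_q(n) for all n ≥ 1, then P_p(0) = P_q(0); i.e., the constant term of such a polynomial is independent of the period p. -/
/-! Both `Pp (q x)` and `Pq (p x)` interpolate the partial sums `∑_{i < pqn} a i` at every
positive integer `n`, so they are the same polynomial; evaluating at `0` gives `Pp 0 = Pq 0`. -/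

open Polynomial

section

variable {R : Type*} [CommRing R] [IsDomain R] [CharZero R]

theorem Polynomial.eq_of_eval_natCast_eq_of_one_le {P Q : R[X]}
    (h : ∀ n : ℕ, 1 ≤ n → P.eval (n : R) = Q.eval (n : R)) : P = Q := by
  refine eq_of_infinite_eval_eq P Q ((Set.Ici_infinite 1).image Nat.cast_injective.injOn |>.mono ?_)
  rintro _ ⟨n, hn, rfl⟩
  exact h n hn

theorem comp_C_mul_X_eq_of_sum_range_mul_eq_eval (a : ℕ → R) {p q : ℕ} (hp : 0 < p) (hq : 0 < q)
    {Pp Pq : R[X]}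
    (hPp : ∀ n : ℕ, 1 ≤ n → ∑ i ∈ Finset.range (p * n), a i = Pp.eval (n : R))
    (hPq : ∀ n : ℕ, 1 ≤ n → ∑ i ∈ Finset.range (q * n), a i = Pq.eval (n : R)) :
    Pp.comp (C (q : R) * X) = Pq.comp (C (p : R) * X) := by
  refine eq_of_eval_natCast_eq_of_one_le fun n hn => ?_
  have hqn := hPp (q * n) (Nat.one_le_iff_ne_zero.mpr (by positivity))
  have hpn := hPq (p * n) (Nat.one_le_iff_ne_zero.mpr (by positivity))
  push_cast at hqn hpn
  simp only [eval_comp, eval_mul, eval_C, eval_X]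
  rw [← hqn, ← hpn, ← mul_assoc, ← mul_assoc, mul_comm p q]

end

theorem stmt5 (a : ℕ → ℂ) (p q : ℕ) (hp : 0 < p) (hq : 0 < q)
    (Pp Pq : Polynomial ℂ)
    (hPp : ∀ n : ℕ, 1 ≤ n → ∑ i ∈ Finset.range (p * n), a i = Pp.eval (n : ℂ))
    (hPq : ∀ n : ℕ, 1 ≤ n → ∑ i ∈ Finset.range (q * n), a i = Pq.eval (n : ℂ)) :
    Pp.eval 0 = Pq.eval 0 := by
  have h := congrArg (eval 0) (comp_C_mul_X_eq_of_sum_range_mul_eq_eval a hp hq hPp hPq)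
  simpa only [eval_comp, eval_mul, eval_C, eval_X, mul_zero] using h
end

section
/- Let R(t) be a rational function over ℂ whose poles lie only among roots of unity (in particular R has no pole at 0 and is proper or can be split off a polynomial part). Write R = R_pol + R_neg where R_pol is a polynomial and R_neg is a rational function of negative degree. Then the Taylor series of R at 0 admits a periodic constant, and this periodic constant equals R_pol(1). -/
/-!
Choose `p` so that every pole is a `p`-th root of unity and `p > deg R_pol`. Then the denominator
divides `(1 - t^p)^E`, so the proper part `R_neg = Σ b_i t^i` satisfies
`R_neg · (1 - t^p)^E = g` with `deg g < pE`. Comparing coefficients of index `≥ pE` shows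
that the `E`-th forward difference of `b` with step `p` vanishes, hence the block sums
`n ↦ Σ_{i<pn} b_i` have vanishing `(E+1)`-st forward difference and, by Newton's formula,
agree with a polynomial `Q` for every `n ≥ 0`; in particular `Q(0) = 0`. For `n ≥ 1` the
polynomial part contributes exactly `R_pol(1)`, so the partial sums are `R_pol(1) + Q(n)`.
-/

open Polynomial Finset fwdDiff
open scoped Nat

theorem Polynomial.exists_pow_eq_one_of_forall_isRoot {R : Type*} [CommRing R] [IsDomain R]
    {f : R[X]} (hf : f ≠ 0) (h : ∀ z, f.IsRoot z → ∃ m, 0 < m ∧ z ^ m = 1) :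
    ∃ p, 0 < p ∧ ∀ z, f.IsRoot z → z ^ p = 1 := by
  have hfin : ∀ z ∈ f.roots, IsOfFinOrder z := fun z hz =>
    isOfFinOrder_iff_pow_eq_one.2 (h z (isRoot_of_mem_roots hz))
  refine ⟨(f.roots.map orderOf).prod, Multiset.prod_pos ?_, fun z hz => ?_⟩
  · intro n hn
    obtain ⟨z, hz, rfl⟩ := Multiset.mem_map.1 hn
    exact (hfin z hz).orderOf_pos
  · exact orderOf_dvd_iff_pow_eq_one.1
      (Multiset.dvd_prod (Multiset.mem_map_of_mem _ ((mem_roots hf).2 hz)))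

theorem Polynomial.dvd_pow_natDegree_of_forall_isRoot {K : Type*} [Field K] [IsAlgClosed K]
    {f q : K[X]} (hf : f ≠ 0) (hq : q ≠ 0) (h : ∀ z, f.IsRoot z → q.IsRoot z) :
    f ∣ q ^ f.natDegree := by
  classical
  rw [IsAlgClosed.dvd_iff_roots_le_roots hf (pow_ne_zero _ hq), roots_pow, Multiset.le_iff_count]
  intro z
  rw [Multiset.count_nsmul]
  by_cases hz : f.IsRoot z
  · calc f.roots.count z ≤ f.natDegree := (Multiset.count_le_card _ _).trans (card_roots' f)
      _ ≤ f.natDegree * q.roots.count z := by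
        rw [count_roots]
        exact Nat.le_mul_of_pos_right _ ((rootMultiplicity_pos hq).2 (h z hz))
  · simp [count_roots, rootMultiplicity_eq_zero hz]

theorem Polynomial.natDegree_one_sub_X_pow {R : Type*} [CommRing R] [Nontrivial R] (p : ℕ) :
    ((1 : R[X]) - X ^ p).natDegree = p := by
  rw [← neg_sub, natDegree_neg, ← C_1, natDegree_X_pow_sub_C]

theorem Polynomial.one_sub_X_pow_ne_zero {R : Type*} [CommRing R] [Nontrivial R] {p : ℕ}
    (hp : 0 < p) : (1 - X ^ p : R[X]) ≠ 0 :=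
  ne_zero_of_natDegree_gt ((natDegree_one_sub_X_pow (R := R) p).symm ▸ hp)

theorem Polynomial.degree_mul_lt_of_mul_eq {R : Type*} [Semiring R] [NoZeroDivisors R]
    {f g h q : R[X]} (hg : g.degree < f.degree) (hq : f * h = q) (hq0 : q ≠ 0) :
    (g * h).degree < q.degree := by
  have hh : h ≠ 0 := by
    rintro rfl
    exact hq0 (by rw [← hq, mul_zero])
  rw [← hq, degree_mul, degree_mul]
  exact WithBot.add_lt_add_right (degree_ne_bot.2 hh) hg

theorem PowerSeries.coeff_mul_one_sub_X_pow {R : Type*} [CommRing R] (F : PowerSeries R)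
    (p n : ℕ) :
    coeff (n + p) (F * (1 - X ^ p)) = coeff (n + p) F - coeff n F := by
  rw [mul_sub, mul_one, map_sub, coeff_mul_X_pow]

theorem PowerSeries.coeff_mk_mul_one_sub_X_pow_pow {R : Type*} [CommRing R] (b : ℕ → R)
    (p E m : ℕ) :
    coeff (m + p * E) (mk b * (1 - X ^ p) ^ E) = (Δ_[p])^[E] b m := by
  induction E generalizing m with
  | zero => simp
  | succ E ih =>
    rw [pow_succ, ← mul_assoc, show m + p * (E + 1) = m + p * E + p by ring,
      coeff_mul_one_sub_X_pow, show m + p * E + p = m + p + p * E by ring, ih, ih,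
      Function.iterate_succ_apply']
    rfl

theorem fwdDiff_iter_eq_zero_of_mk_mul_one_sub_X_pow_pow {R : Type*} [CommRing R] {b : ℕ → R}
    {p E : ℕ} {g : R[X]} (hg : g.degree < ↑(p * E))
    (h : PowerSeries.mk b * (1 - PowerSeries.X ^ p) ^ E = (g : PowerSeries R)) :
    (Δ_[p])^[E] b = 0 := by
  ext m
  rw [← PowerSeries.coeff_mk_mul_one_sub_X_pow_pow, h, coeff_coe, Pi.zero_apply]
  exact coeff_eq_zero_of_degree_lt (hg.trans_le (by exact_mod_cast Nat.le_add_left _ _))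

theorem fwdDiff_iter_comp_addMonoidHom {M M' G : Type*} [AddCommMonoid M] [AddCommMonoid M']
    [AddCommGroup G] (e : M →+ M') (f : M' → G) (h : M) (n : ℕ) (y : M) :
    (Δ_[h])^[n] (f ∘ e) y = (Δ_[e h])^[n] f (e y) := by
  simp [fwdDiff_iter_eq_sum_shift, map_add, map_nsmul]

theorem fwdDiff_iter_succ_sum_range_mul_eq_zero {G : Type*} [AddCommGroup G] {b : ℕ → G}
    {p E : ℕ} (hb : (Δ_[p])^[E] b = 0) :
    (Δ_[1])^[E + 1] (fun n => ∑ i ∈ range (p * n), b i) = 0 := by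
  set U : ℕ → G := fun m => ∑ i ∈ range m, b i
  have hU : Δ_[p] U = ∑ r ∈ range p, fun m => b (m + r) := by
    ext m
    simp [U, fwdDiff, sum_range_add]
  ext n
  have hcomp := fwdDiff_iter_comp_addMonoidHom (AddMonoidHom.mulLeft p) U 1 (E + 1) n
  simp only [AddMonoidHom.coe_mulLeft, mul_one] at hcomp
  rw [Pi.zero_apply, show (fun n => ∑ i ∈ range (p * n), b i) = U ∘ (p * ·) from rfl, hcomp,
    Function.iterate_succ_apply, hU, fwdDiff_iter_finsetSum]
  simp [fwdDiff_iter_comp_add, hb]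

theorem exists_eval_eq_of_fwdDiff_iter_eq_zero {K : Type*} [Field K] [CharZero K] {s : ℕ → K}
    {d : ℕ} (hs : (Δ_[1])^[d] s = 0) : ∃ Q : K[X], ∀ n : ℕ, s n = Q.eval (n : K) := by
  refine ⟨∑ k ∈ range d, C ((Δ_[1])^[k] s 0 / k !) * descPochhammer K k, fun n => ?_⟩
  have hzero : Δ_[1] (0 : ℕ → K) = 0 := fwdDiff_const 1 0
  have hvanish : ∀ k, d ≤ k → (Δ_[1])^[k] s 0 = 0 := fun k hk => by
    rw [← Nat.sub_add_cancel hk, Function.iterate_add_apply, hs, Function.iterate_fixed hzero,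
      Pi.zero_apply]
  have hnewton : s n = ∑ k ∈ range (n + 1 + d), n.choose k • (Δ_[1])^[k] s 0 := by
    rw [← sum_subset (range_subset_range.2 (Nat.le_add_right _ d)) fun k _ hk => ?_]
    · simpa using shift_eq_sum_fwdDiff_iter 1 s n 0
    · rw [Nat.choose_eq_zero_of_lt (by simpa using hk), zero_smul]
  rw [hnewton, ← sum_subset (range_subset_range.2 (Nat.le_add_left d _)) fun k _ hk => ?_]
  · simp only [eval_finsetSum, eval_mul, eval_C, nsmul_eq_mul,
      Nat.cast_choose_eq_descPochhammer_div]
    exact sum_congr rfl fun k _ => by ring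
  · rw [hvanish k (by simpa using hk), smul_zero]

theorem exists_eval_eq_sum_range_mul_of_dvd_one_sub_X_pow_pow {K : Type*} [Field K] [CharZero K]
    {b : ℕ → K} {den rem : K[X]} {p E : ℕ} (hp : 0 < p)
    (hb : PowerSeries.mk b * (den : PowerSeries K) = (rem : PowerSeries K))
    (hdeg : rem.degree < den.degree) (hdvd : den ∣ (1 - X ^ p) ^ E) :
    ∃ Q : K[X], ∀ n : ℕ, ∑ i ∈ range (p * n), b i = Q.eval (n : K) := by
  obtain ⟨h, hh⟩ := hdvd
  have hq : ((1 - X ^ p) ^ E : K[X]) ≠ 0 := pow_ne_zero _ (one_sub_X_pow_ne_zero hp)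
  have hg : (rem * h).degree < ↑(p * E) := by
    have := degree_mul_lt_of_mul_eq hdeg hh.symm hq
    rwa [degree_eq_natDegree hq, natDegree_pow, natDegree_one_sub_X_pow, mul_comm E p] at this
  have hbg :
      PowerSeries.mk b * (1 - PowerSeries.X ^ p) ^ E = ((rem * h : K[X]) : PowerSeries K) := by
    have hpow : (1 - PowerSeries.X ^ p) ^ E = ((den * h : K[X]) : PowerSeries K) := by
      rw [← hh]; simp
    rw [hpow, Polynomial.coe_mul, Polynomial.coe_mul, ← mul_assoc, hb]
  exact exists_eval_eq_of_fwdDiff_iter_eq_zero <| fwdDiff_iter_succ_sum_range_mul_eq_zero <|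
    fwdDiff_iter_eq_zero_of_mk_mul_one_sub_X_pow_pow hg hbg

theorem stmt7 (num den Rpol rem : Polynomial ℂ) (hden : den ≠ 0)
    (hroots : ∀ z : ℂ, den.IsRoot z → ∃ m : ℕ, 0 < m ∧ z ^ m = 1)
    (hdiv : num = Rpol * den + rem) (hdeg : rem.degree < den.degree)
    (a : ℕ → ℂ)
    (ha : PowerSeries.mk a * (den : PowerSeries ℂ) = (num : PowerSeries ℂ)) :
    ∃ (p : ℕ) (P : Polynomial ℂ), 0 < p ∧
      (∀ n : ℕ, 1 ≤ n → ∑ i ∈ Finset.range (p * n), a i = P.eval (n : ℂ)) ∧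
      P.eval 0 = Rpol.eval 1 := by
  obtain ⟨p₀, hp₀, hp₀_root⟩ := exists_pow_eq_one_of_forall_isRoot hden hroots
  set p := p₀ * (Rpol.natDegree + 1)
  have hp : 0 < p := Nat.mul_pos hp₀ Nat.succ_pos'
  have hRdeg : Rpol.natDegree < p := Nat.lt_succ_self _ |>.trans_le (Nat.le_mul_of_pos_left _ hp₀)
  have hdvd : den ∣ (1 - X ^ p) ^ den.natDegree :=
    dvd_pow_natDegree_of_forall_isRoot hden (one_sub_X_pow_ne_zero hp) fun z hz => by
      simp [p, pow_mul, hp₀_root z hz]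
  set b : ℕ → ℂ := fun i => a i - Rpol.coeff i
  have hb : PowerSeries.mk b * (den : PowerSeries ℂ) = (rem : PowerSeries ℂ) := by
    have hmk : PowerSeries.mk b = PowerSeries.mk a - (Rpol : PowerSeries ℂ) := by
      ext i; simp [b]
    rw [hmk, sub_mul, ha, hdiv]
    push_cast
    ring
  obtain ⟨Q, hQ⟩ := exists_eval_eq_sum_range_mul_of_dvd_one_sub_X_pow_pow hp hb hdeg hdvd
  refine ⟨p, C (Rpol.eval 1) + Q, hp, fun n hn => ?_, by simpa using (hQ 0).symm⟩
  have hRpol : Rpol.eval 1 = ∑ i ∈ range (p * n), Rpol.coeff i := by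
    simp [eval_eq_sum_range' (hRdeg.trans_le (Nat.le_mul_of_pos_right p hn))]
  rw [eval_add, eval_C, ← hQ, hRpol, ← sum_add_distrib]
  simp [b]
end

section
/- Let I be a negative definite symmetric integer matrix indexed by the vertices of a finite tree Γ, with I_{uw} = 1 when u ≠ w are adjacent, I_{uw} = 0 when u ≠ w are not adjacent, and arbitrary diagonal entries b_w. Set d = det(-I) and a_{uw} = -d · (I^{-1})_{uw}. Then every a_{uw} is a positive integer. -/
/-!
Write `A = -I`, a positive definite matrix whose off-diagonal entries are `≤ 0` and strictly
negative exactly along the edges of the connected graph `Γ`. Then `-d I⁻¹ = d A⁻¹ = adj A`, an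
integer matrix, so it suffices that `A⁻¹` has positive entries. A column `x` of `A⁻¹` satisfies
`A x ≥ 0`; writing `x = x⁺ - x⁻`, the sign pattern of `A` gives `x⁻ ⬝ A x⁻ ≤ 0`, hence `x⁻ = 0`
by definiteness. Finally, in row `j` of `A x = e_w` the diagonal term `A_jj x_j` dominates
`-A_ji x_i` for every neighbour `i`, so positivity of `x` spreads from `w` along the edges of `Γ`.
-/

open Matrix Finset

namespace Matrix

variable {n : Type*} [Fintype n]

theorem diag_mul_eq_mulVec_add_sum_erase [DecidableEq n] {R : Type*} [CommRing R]
    (M : Matrix n n R) (x : n → R) (j : n) :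
    M j j * x j = (M *ᵥ x) j + ∑ k ∈ univ.erase j, -M j k * x k := by
  rw [mulVec, dotProduct, ← add_sum_erase _ _ (mem_univ j)]
  simp only [neg_mul, sum_neg_distrib]
  ring

theorem inv_neg [DecidableEq n] {R : Type*} [CommRing R] (A : Matrix n n R) :
    (-A)⁻¹ = -A⁻¹ := by
  by_cases hA : IsUnit A.det
  · refine inv_eq_left_inv ?_
    rw [neg_mul_neg, nonsing_inv_mul _ hA]
  · have hnA : ¬IsUnit (-A).det := by
      simpa [det_neg, IsUnit.mul_iff, (isUnit_neg_one (α := R)).pow (Fintype.card n)] using hA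
    rw [nonsing_inv_apply_not_isUnit _ hA, nonsing_inv_apply_not_isUnit _ hnA, neg_zero]

theorem intCast_det_mul_inv_map_apply [DecidableEq n] {K : Type*} [Field K] [CharZero K]
    (A : Matrix n n ℤ) (hA : A.det ≠ 0) (u w : n) :
    (A.det : K) * (A.map ((↑) : ℤ → K))⁻¹ u w = A.adjugate u w := by
  have hadj : (A.map ((↑) : ℤ → K)).adjugate = A.adjugate.map (↑) := by
    simpa using ((Int.castRingHom K).map_adjugate A).symm
  rw [inv_def, ← Int.cast_det, hadj, smul_apply, map_apply, Ring.inverse_eq_inv', smul_eq_mul,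
    mul_inv_cancel_left₀ (Int.cast_ne_zero.mpr hA)]

section ZMatrix

variable {R : Type*} [CommRing R] [LinearOrder R] [IsStrictOrderedRing R] {M : Matrix n n R}

theorem dotProduct_mulVec_nonpos (hoff : ∀ i j, i ≠ j → M i j ≤ 0)
    {y z : n → R} (hy : 0 ≤ y) (hz : 0 ≤ z) (hyz : ∀ i, y i * z i = 0) :
    y ⬝ᵥ (M *ᵥ z) ≤ 0 := by
  simp only [dotProduct, mulVec, mul_sum]
  refine sum_nonpos fun i _ => sum_nonpos fun j _ => ?_
  rcases eq_or_ne i j with rfl | hij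
  · rw [mul_left_comm, hyz, mul_zero]
  · rw [mul_left_comm]
    exact mul_nonpos_of_nonpos_of_nonneg (hoff i j hij) (mul_nonneg (hy i) (hz j))

theorem pos_of_mulVec_nonneg [DecidableEq n] (hoff : ∀ i j, i ≠ j → M i j ≤ 0) {x : n → R}
    (hx : 0 ≤ x) (hMx : 0 ≤ M *ᵥ x) {j : n}
    (h : 0 < (M *ᵥ x) j ∨ ∃ i ≠ j, M j i < 0 ∧ 0 < x i) : 0 < x j := by
  have hterm : ∀ k ∈ univ.erase j, 0 ≤ -M j k * x k := fun k hk =>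
    mul_nonneg (neg_nonneg.mpr (hoff j k (ne_of_mem_erase hk).symm)) (hx k)
  have hdiag : 0 < M j j * x j := by
    rw [diag_mul_eq_mulVec_add_sum_erase]
    rcases h with h | ⟨i, hij, hMji, hxi⟩
    · exact add_pos_of_pos_of_nonneg h (sum_nonneg hterm)
    · refine add_pos_of_nonneg_of_pos (hMx j) (lt_of_lt_of_le ?_
        (single_le_sum hterm (mem_erase.mpr ⟨hij, mem_univ i⟩)))
      exact mul_pos (neg_pos.mpr hMji) hxi
  exact (hx j).lt_of_ne fun h0 => by simp [← h0] at hdiag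

variable [StarRing R] [TrivialStar R]

theorem PosDef.nonneg_of_mulVec_nonneg (hM : M.PosDef) (hoff : ∀ i j, i ≠ j → M i j ≤ 0)
    {x : n → R} (hMx : 0 ≤ M *ᵥ x) : 0 ≤ x := by
  set y : n → R := fun i => (x i)⁻
  set z : n → R := fun i => (x i)⁺
  have hy : 0 ≤ y := fun i => negPart_nonneg _
  have hz : 0 ≤ z := fun i => posPart_nonneg _
  have hyz : ∀ i, y i * z i = 0 := fun i => by
    rcases le_total 0 (x i) with h | h <;> simp [y, z, h]
  have hxzy : x = z - y := funext fun i => (posPart_sub_negPart (x i)).symm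
  have hyMy : y ⬝ᵥ (M *ᵥ y) ≤ 0 := by
    have hsplit : y ⬝ᵥ (M *ᵥ y) = y ⬝ᵥ (M *ᵥ z) - y ⬝ᵥ (M *ᵥ x) := by
      rw [hxzy, mulVec_sub, dotProduct_sub]
      ring
    linarith [dotProduct_mulVec_nonpos hoff hy hz hyz, dotProduct_nonneg_of_nonneg hy hMx]
  have hy0 : y = 0 := by
    by_contra hne
    have := hM.dotProduct_mulVec_pos hne
    rw [star_trivial] at this
    linarith
  rw [hxzy, hy0, sub_zero]
  exact hz

end ZMatrix

theorem PosDef.inv_apply_pos [DecidableEq n] {K : Type*} [Field K] [LinearOrder K]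
    [IsStrictOrderedRing K] [StarRing K] [TrivialStar K] {G : SimpleGraph n} (hG : G.Connected) {M : Matrix n n K}
    (hM : M.PosDef) (hoff : ∀ i j, i ≠ j → M i j ≤ 0) (hadj : ∀ i j, G.Adj i j → M i j < 0)
    (u w : n) : 0 < M⁻¹ u w := by
  set x := M⁻¹ *ᵥ Pi.single w 1
  have hMx : M *ᵥ x = Pi.single w 1 := by
    rw [mulVec_mulVec, mul_nonsing_inv _ ((isUnit_iff_isUnit_det M).mp hM.isUnit), one_mulVec]
  have hMx0 : 0 ≤ M *ᵥ x := hMx ▸ Pi.single_nonneg.mpr zero_le_one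
  have hx := hM.nonneg_of_mulVec_nonneg hoff hMx0
  have hpos : ∀ v, 0 < x v := by
    intro v
    have hwv := hG.preconnected w v
    rw [SimpleGraph.reachable_eq_reflTransGen] at hwv
    induction hwv with
    | refl => exact pos_of_mulVec_nonneg hoff hx hMx0 (Or.inl (by simp [hMx]))
    | tail _ hab ih =>
      exact pos_of_mulVec_nonneg hoff hx hMx0 (Or.inr ⟨_, hab.ne, hadj _ _ hab.symm, ih⟩)
  simpa [x, mulVec_single_one] using hpos u

end Matrix

theorem stmt8 (V : Type*) [Fintype V] [DecidableEq V]
    (G : SimpleGraph V) [DecidableRel G.Adj] (hG : G.IsTree)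
    (I : Matrix V V ℤ)
    (hoff : ∀ u w : V, u ≠ w → I u w = if G.Adj u w then 1 else 0)
    (hneg : Matrix.PosDef ((-I).map ((↑) : ℤ → ℝ))) :
    ∀ u w : V,
      0 < -(((-I).det : ℚ)) * ((I.map ((↑) : ℤ → ℚ))⁻¹ u w) ∧
      ∃ n : ℤ, -(((-I).det : ℚ)) * ((I.map ((↑) : ℤ → ℚ))⁻¹ u w) = (n : ℚ) := by
  intro u w
  have hd : (0 : ℝ) < (-I).det := by rw [Int.cast_det]; exact hneg.det_pos
  have hd0 : (-I).det ≠ 0 := by exact_mod_cast hd.ne'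
  have hentry (K : Type) [Field K] [CharZero K] :
      -(((-I).det : K)) * (I.map ((↑) : ℤ → K))⁻¹ u w = (-I).adjugate u w := by
    have hI : I.map ((↑) : ℤ → K) = -(-I).map (↑) := by ext; simp
    rw [hI, Matrix.inv_neg, neg_apply, neg_mul_neg,
      intCast_det_mul_inv_map_apply _ hd0]
  have hMinv : 0 < ((-I).map ((↑) : ℤ → ℝ))⁻¹ u w :=
    hneg.inv_apply_pos hG.connected (fun i j hij => by
      simp only [map_apply, neg_apply, hoff i j hij]; split_ifs <;> norm_num)
      (fun i j hij => by simp [hoff i j hij.ne, hij]) u w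
  have hadj : (0 : ℝ) < (-I).adjugate u w := by
    rw [← intCast_det_mul_inv_map_apply _ hd0]
    exact mul_pos hd hMinv
  rw [hentry ℚ]
  exact ⟨by exact_mod_cast hadj, _, rfl⟩
end

section
/- Let Γ be a finite tree with a negative definite intersection matrix I (off-diagonal entries 1 for adjacent vertices, 0 otherwise), d = det(-I), and a_{uw} = -d·(I^{-1})_{uw}. For vertices u, w of Γ, let Γ∖(path from u to w) denote the graph obtained by deleting all vertices on the unique path from u to w (inclusive) together with incident edges. Then a_{uw} = det(Γ ∖ path(u,w)), where det of a graph means det of the negative of its intersection matrix, with det(∅) = 1. -/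
/-!
Expand the cofactor `adj(-I)_{uw} = det((-I).updateRow w e_u)` over permutations `σ`. A nonzero
term forces `σ w = u` and, for `v ≠ w`, either `σ v = v` or `σ v` adjacent to `v`. Hence the
`σ`-orbit of `u` runs along a path to `w`, which in a forest is `P`, so `σ` is the cyclic shift of
`P` times a permutation of the vertices off `P`. The cycle contributes its sign `(-1)^|P|` and the
weights of the edges of `P`, and the permutations off `P` sum to the complementary minor. For
`-I` every edge weight is `-1`, and `-det(-I) • I⁻¹ = adj(-I)`.
-/

open Matrix

section

open Equiv Function

theorem List.nodup_map_iterate_range {α : Type*} {f : α → α} (hf : Injective f) {v w : α}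
    {k : ℕ} (hk : f^[k] v = w) (hmin : ∀ j < k, f^[j] v ≠ w) :
    ((List.range (k + 1)).map (f^[·] v)).Nodup := by
  refine List.nodup_range.map_on fun i hi j hj hij => ?_
  simp only [List.mem_range] at hi hj
  by_contra hne
  wlog hlt : i < j generalizing i j
  · exact this j i hij.symm hj hi (Ne.symm hne) (by omega)
  have hper : f^[j - i] v = v :=
    hf.iterate i (by rw [← iterate_add_apply, Nat.add_sub_cancel' hlt.le]; exact hij.symm)
  refine hmin (k - (j - i)) (by omega) ?_
  calc f^[k - (j - i)] v = f^[k - (j - i)] (f^[j - i] v) := by rw [hper]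
    _ = w := by rw [← iterate_add_apply, Nat.sub_add_cancel (by omega), hk]

theorem List.sign_formPerm_of_nodup {α : Type*} [Fintype α] [DecidableEq α] {l : List α}
    (hl : l.Nodup) (hne : l ≠ []) : Perm.sign l.formPerm = (-1) ^ (l.length + 1) := by
  match l, hl, hne with
  | [_], _, _ => simp
  | x :: y :: l, hl, _ =>
    rw [(List.isCycle_formPerm hl (by simp)).sign,
      List.support_formPerm_of_nodup _ hl (by simp), List.card_toFinset, hl.dedup, pow_succ,
      mul_neg_one]

namespace SimpleGraph

variable {V : Type*} {G : SimpleGraph V}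

theorem exists_walk_support_eq_map_iterate (f : V → V) (v : V) (k : ℕ)
    (hadj : ∀ j < k, G.Adj (f^[j] v) (f^[j + 1] v)) :
    ∃ Q : G.Walk v (f^[k] v), Q.support = (List.range (k + 1)).map (f^[·] v) := by
  induction k generalizing v with
  | zero => exact ⟨.nil, rfl⟩
  | succ k ih =>
    obtain ⟨Q, hQ⟩ := ih (f v) fun j hj => hadj (j + 1) (by omega)
    have h0 : G.Adj v (f v) := hadj 0 k.succ_pos
    refine ⟨(Walk.cons h0 Q).copy rfl (iterate_succ_apply f k v).symm, ?_⟩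
    rw [Walk.support_copy, Walk.support_cons, hQ, List.range_succ_eq_map (n := k + 1),
      List.map_cons, List.map_map]
    rfl

theorem IsAcyclic.apply_eq_formPerm_support [Finite V] [DecidableEq V] (hG : G.IsAcyclic)
    {u w : V} (P : G.Walk u w) (hP : P.IsPath) {σ : Perm V} (hw : σ w = u)
    (hσ : ∀ v, v ≠ w → σ v = v ∨ G.Adj v (σ v)) (v : V) (hv : v ∈ P.support) :
    σ v = P.support.formPerm v := by
  -- The `σ`-orbit of `u` is a path to `w`, hence equals `P`.
  have hex : ∃ k, σ^[k] u = w :=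
    (Perm.SameCycle.symm ⟨1, by simpa using hw⟩ : σ.SameCycle u w).exists_nat_pow_eq
  obtain ⟨k, rfl, hmin⟩ : ∃ k, σ^[k] u = w ∧ ∀ j < k, σ^[j] u ≠ w :=
    ⟨Nat.find hex, Nat.find_spec hex, fun j hj => Nat.find_min hex hj⟩
  have hadj : ∀ j < k, G.Adj (σ^[j] u) (σ^[j + 1] u) := by
    intro j hj
    rw [iterate_succ_apply']
    refine (hσ _ (hmin j hj)).resolve_left fun hfix => hmin j hj ?_
    rw [← Nat.sub_add_cancel hj.le, iterate_add_apply, iterate_fixed hfix]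
  obtain ⟨Q, hQ⟩ := exists_walk_support_eq_map_iterate σ u k hadj
  have hnodup := List.nodup_map_iterate_range σ.injective rfl hmin
  have hPQ : P = Q := congrArg Subtype.val <|
    (hG.subsingleton_path u _).elim ⟨P, hP⟩ ⟨Q, (Walk.isPath_def Q).2 (hQ ▸ hnodup)⟩
  have hperiodic : IsPeriodicPt σ (k + 1) u := by
    rw [IsPeriodicPt, IsFixedPt, iterate_succ_apply', hw]
  rw [hPQ, hQ] at hv ⊢
  obtain ⟨i, hi, rfl⟩ := List.mem_map.1 hv
  rw [List.mem_range] at hi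
  have hget := List.formPerm_apply_getElem _ hnodup i (by simpa using hi)
  simp only [List.getElem_map, List.getElem_range, List.length_map, List.length_range] at hget
  rw [hget, hperiodic.iterate_mod_apply, iterate_succ_apply']

variable {R : Type*} [CommRing R]

theorem Walk.prod_updateRow_formPerm_support [DecidableEq V] (A : Matrix V V R) {u w : V}
    (P : G.Walk u w) (hP : P.IsPath) :
    ∏ v ∈ P.support.toFinset, A.updateRow w (Pi.single u 1) v (P.support.formPerm v)
      = (P.darts.map fun d => A d.fst d.snd).prod := by
  -- `g` shields the `P.support` inside `formPerm` from the rewrite by `hsplit`.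
  set g := fun v => A.updateRow w (Pi.single u 1) v (P.support.formPerm v) with hg
  have hsplit : P.support = P.support.dropLast ++ [w] := by
    conv_lhs => rw [← List.dropLast_append_getLast P.support_ne_nil, P.getLast_support]
  have hcw : P.support.formPerm w = u := by
    have := List.formPerm_apply_getElem _ hP.support_nodup P.length (by simp)
    simpa [Nat.mod_self] using this
  rw [List.prod_toFinset _ hP.support_nodup, hsplit, List.map_append, List.prod_append]
  simp only [List.map_cons, List.map_nil, List.prod_singleton, hg, hcw, updateRow_self,
    Pi.single_eq_same, mul_one]
  congr 1
  refine List.ext_getElem (by simp) fun i hi hi' => ?_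
  have hlt : i < P.length := by simpa using hi'
  have hne : P.support[i]'(by simp; omega) ≠ w := by
    conv_rhs => rw [← P.support_getElem_length]
    rw [Ne, hP.support_nodup.getElem_inj_iff]
    omega
  simp only [List.getElem_map, List.getElem_dropLast, Walk.fst_darts_getElem,
    Walk.snd_darts_getElem, List.getElem_tail]
  rw [List.formPerm_apply_lt_getElem _ hP.support_nodup i (by simp; omega), updateRow_ne hne]

theorem Walk.prod_updateRow_formPerm_mul_ofSubtype [Fintype V] [DecidableEq V]
    (A : Matrix V V R) {u w : V} (P : G.Walk u w) (hP : P.IsPath)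
    (τ : Perm {v // v ∉ P.support}) :
    ∏ v, A.updateRow w (Pi.single u 1) v ((P.support.formPerm * Perm.ofSubtype τ) v)
      = (P.darts.map fun d => A d.fst d.snd).prod * ∏ v : {v // v ∉ P.support}, A v (τ v) := by
  rw [← Finset.prod_mul_prod_compl P.support.toFinset, ← P.prod_updateRow_formPerm_support A hP,
    Finset.prod_subtype P.support.toFinsetᶜ (p := (· ∉ P.support)) (by simp)]
  congr 1
  · refine Finset.prod_congr rfl fun v hv => ?_
    rw [Perm.mul_apply, Perm.ofSubtype_apply_of_not_mem τ (by simpa using hv)]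
  · refine Finset.prod_congr rfl fun v _ => ?_
    have hvw : (v : V) ≠ w := fun h => v.2 (by rw [h]; exact P.end_mem_support)
    rw [Perm.mul_apply, Perm.ofSubtype_apply_of_mem τ v.2, List.formPerm_apply_of_notMem (τ _).2,
      updateRow_ne hvw]

theorem IsAcyclic.exists_formPerm_mul_ofSubtype_eq [Fintype V] [DecidableEq V]
    (hG : G.IsAcyclic) {A : Matrix V V R} (hA : ∀ a b, a ≠ b → ¬G.Adj a b → A a b = 0)
    {u w : V} (P : G.Walk u w) (hP : P.IsPath) {σ : Perm V}
    (hσ : ∀ v, A.updateRow w (Pi.single u 1) v (σ v) ≠ 0) :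
    ∃ τ : Perm {v // v ∉ P.support}, P.support.formPerm * Perm.ofSubtype τ = σ := by
  have hw : σ w = u := by
    by_contra h
    exact hσ w (by rw [updateRow_self, Pi.single_eq_of_ne h])
  have hstep : ∀ v, v ≠ w → σ v = v ∨ G.Adj v (σ v) := by
    intro v hv
    by_contra! h
    exact hσ v (by rw [updateRow_ne hv]; exact hA v (σ v) (Ne.symm h.1) h.2)
  have hfix : ∀ x ∈ P.support, (P.support.formPerm⁻¹ * σ) x = x := fun x hx => by
    rw [Perm.mul_apply, hG.apply_eq_formPerm_support P hP hw hstep x hx, ← Perm.mul_apply,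
      inv_mul_cancel, Perm.one_apply]
  obtain ⟨τ, hτ⟩ := MonoidHom.mem_range.1 <|
    (Perm.mem_range_ofSubtype_iff (p := (· ∉ P.support))).2 fun x hx hxP =>
      Perm.mem_support.1 hx (hfix x hxP)
  exact ⟨τ, by rw [hτ, mul_inv_cancel_left]⟩

theorem IsAcyclic.adjugate_apply_eq [Fintype V] [DecidableEq V] (hG : G.IsAcyclic)
    {A : Matrix V V R} (hA : ∀ a b, a ≠ b → ¬G.Adj a b → A a b = 0)
    {u w : V} (P : G.Walk u w) (hP : P.IsPath) :
    A.adjugate u w = (-1) ^ P.length * (P.darts.map fun d => A d.fst d.snd).prod *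
      (A.submatrix (↑) (↑) : Matrix {v // v ∉ P.support} {v // v ∉ P.support} R).det := by
  rw [adjugate_apply, ← det_transpose, det_apply', ← det_transpose (A.submatrix _ _), det_apply',
    Finset.mul_sum]
  symm
  refine Fintype.sum_of_injective (fun τ => P.support.formPerm * Perm.ofSubtype τ)
    (fun τ τ' h => Perm.ofSubtype_injective (mul_left_cancel h)) _ _ ?_ fun τ => ?_
  · intro σ hσ
    by_contra hne
    obtain ⟨τ, rfl⟩ := hG.exists_formPerm_mul_ofSubtype_eq hA P hP fun v h0 =>
      hne (by rw [Finset.prod_eq_zero (Finset.mem_univ v) h0, mul_zero])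
    exact hσ ⟨τ, rfl⟩
  · simp only [transpose_apply, submatrix_apply]
    rw [P.prod_updateRow_formPerm_mul_ofSubtype A hP, map_mul, Perm.sign_ofSubtype,
      List.sign_formPerm_of_nodup hP.support_nodup P.support_ne_nil, Walk.length_support]
    push_cast
    ring

end SimpleGraph

end

namespace Matrix

variable {n : Type*} [Fintype n] [DecidableEq n]

theorem inv_neg_of_isUnit_det {R : Type*} [CommRing R] (A : Matrix n n R) (h : IsUnit A.det) :
    (-A)⁻¹ = -A⁻¹ :=
  inv_eq_left_inv (by rw [neg_mul_neg, nonsing_inv_mul A h])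

theorem map_det_mul_inv_map_apply {R K : Type*} [CommRing R] [Field K] (f : R →+* K)
    (A : Matrix n n R) (h : f A.det ≠ 0) (i j : n) :
    f A.det * (A.map f)⁻¹ i j = f (A.adjugate i j) := by
  rw [inv_def, smul_apply, smul_eq_mul, ← f.mapMatrix_apply, ← f.map_det, Ring.inverse_eq_inv',
    mul_inv_cancel_left₀ h, ← f.map_adjugate]
  rfl

end Matrix

theorem stmt9 (V : Type*) [Fintype V] [DecidableEq V]
    (G : SimpleGraph V) [DecidableRel G.Adj] (hG : G.IsTree)
    (I : Matrix V V ℤ)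
    (hoff : ∀ u w : V, u ≠ w → I u w = if G.Adj u w then 1 else 0)
    (hneg : Matrix.PosDef ((-I).map ((↑) : ℤ → ℝ)))
    (u w : V) (P : G.Walk u w) (hP : P.IsPath) :
    -(((-I).det : ℚ)) * ((I.map ((↑) : ℤ → ℚ))⁻¹ u w)
      = ((Matrix.det (Matrix.of fun i j : {x : V // x ∉ P.support} => -I i.1 j.1) : ℤ) : ℚ) := by
  have hdet : ((-I).det : ℚ) ≠ 0 := by
    have h := hneg.det_pos
    rw [← Int.cast_det] at h
    exact_mod_cast h.ne'
  have hI : I.map ((↑) : ℤ → ℚ) = -(-I).map ((↑) : ℤ → ℚ) := by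
    ext; simp
  have hpath : (P.darts.map fun d => (-I) d.fst d.snd).prod = (-1) ^ P.length := by
    rw [List.map_congr_left (g := fun _ => -1) fun d _ => by simp [hoff _ _ d.adj.ne, d.adj],
      List.map_const', List.prod_replicate, P.length_darts]
  calc -(((-I).det : ℚ)) * ((I.map ((↑) : ℤ → ℚ))⁻¹ u w)
      = ((-I).det : ℚ) * ((-I).map ((↑) : ℤ → ℚ))⁻¹ u w := by
        rw [hI, inv_neg_of_isUnit_det _ (by rwa [← Int.cast_det, isUnit_iff_ne_zero]),
          Matrix.neg_apply, neg_mul_neg]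
    _ = (((-I).adjugate u w : ℤ) : ℚ) := map_det_mul_inv_map_apply (Int.castRingHom ℚ) _ hdet u w
    _ = _ := by
        rw [hG.isAcyclic.adjugate_apply_eq (fun a b hab hadj => by simp [hoff a b hab, hadj]) P hP,
          hpath, ← mul_pow, neg_one_mul, neg_neg, one_pow, one_mul]
        rfl
end

section
/- Let Γ be a finite negative definite tree with intersection matrix I, and let a_{uw} = -det(-I)·(I^{-1})_{uw}. Let δ_w denote the degree of vertex w in Γ. Then for any vertex u, one has a_{uu} · Π_{w ∈ V(Γ)} a_{uw}^{δ_w - 2} = 1. -/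
/-!
The numbers `a_{uw}` are the entries of `adj N` for `N = -I`. Pick a leaf `ℓ ≠ u` of the tree,
with neighbour `n₀`, and take the Schur complement `S` of `N` at `ℓ`. Only the `(n₀, n₀)` entry
changes, so `S` is again positive definite with the off-diagonal pattern of the pruned tree.
Block inversion gives `adj N = N ℓ ℓ • adj S` away from `ℓ` and `(adj N) x ℓ = (adj S) x n₀`.
The exponents `δ_w - 2` of a tree sum to `-2`, so the factors `N ℓ ℓ` cancel, and the exponent
`-1` of the leaf cancels the extra `+1` at `n₀`. Hence the product for the tree equals the product
for the pruned tree, and at a single vertex it is `1`. Positivity of the entries of `adj N` is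
carried through the same induction, because the cancellations of integer powers need them to be
nonzero.
-/

open Finset

namespace Matrix

section Pivot

variable {V K : Type*}

def schurComplementAt [Field K] (N : Matrix V V K) (ℓ : V) :
    Matrix ↥({ℓ}ᶜ : Set V) ↥({ℓ}ᶜ : Set V) K :=
  of fun x y => N x y - N x ℓ * (N ℓ ℓ)⁻¹ * N ℓ y

lemma schurComplementAt_eq_sub [Field K] (N : Matrix V V K) (ℓ : V) :
    schurComplementAt N ℓ = N.submatrix Subtype.val Subtype.val -
      replicateCol Unit (fun x : ↥({ℓ}ᶜ : Set V) => N x ℓ) *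
        (of fun _ _ => N ℓ ℓ : Matrix Unit Unit K)⁻¹ *
          replicateRow Unit (fun y : ↥({ℓ}ᶜ : Set V) => N ℓ y) := by
  ext x y
  simp [schurComplementAt, mul_apply]

variable [DecidableEq V]

def pivotEquiv (ℓ : V) : ↥({ℓ}ᶜ : Set V) ⊕ Unit ≃ V where
  toFun := Sum.elim Subtype.val fun _ => ℓ
  invFun x := if h : x = ℓ then .inr () else .inl ⟨x, h⟩
  left_inv := by
    rintro (⟨x, hx⟩ | ⟨⟩)
    · simp [Set.mem_compl_singleton_iff.mp hx]
    · simp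
  right_inv x := by by_cases h : x = ℓ <;> simp [h]

lemma submatrix_pivotEquiv (N : Matrix V V K) (ℓ : V) :
    N.submatrix (pivotEquiv ℓ) (pivotEquiv ℓ) =
      fromBlocks (N.submatrix Subtype.val Subtype.val) (replicateCol Unit fun x => N x ℓ)
        (replicateRow Unit fun y => N ℓ y) (of fun _ _ => N ℓ ℓ) := by
  ext (x | x) (y | y) <;> rfl

variable [Field K] {N : Matrix V V K} {ℓ : V}

@[reducible] noncomputable def pivotInvertible (hℓ : N ℓ ℓ ≠ 0) :
    Invertible (of fun (_ : Unit) (_ : Unit) => N ℓ ℓ) :=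
  invertibleOfIsUnitDet _ (by simpa [det_unique] using hℓ)

variable [Fintype V]

lemma det_eq_mul_det_schurComplementAt (hℓ : N ℓ ℓ ≠ 0) :
    N.det = N ℓ ℓ * (schurComplementAt N ℓ).det := by
  have := pivotInvertible hℓ
  rw [← det_submatrix_equiv_self (pivotEquiv ℓ), submatrix_pivotEquiv, det_fromBlocks₂₂,
    det_unique, invOf_eq_nonsing_inv, ← schurComplementAt_eq_sub]
  rfl

lemma det_schurComplementAt_ne_zero (hℓ : N ℓ ℓ ≠ 0) (hN : N.det ≠ 0) :
    (schurComplementAt N ℓ).det ≠ 0 := by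
  rw [det_eq_mul_det_schurComplementAt hℓ] at hN
  exact right_ne_zero_of_mul hN

lemma inv_apply_eq_schurComplementAt (hℓ : N ℓ ℓ ≠ 0) (hN : N.det ≠ 0)
    (x y : ↥({ℓ}ᶜ : Set V)) :
    N⁻¹ x y = (schurComplementAt N ℓ)⁻¹ x y ∧
      N⁻¹ x ℓ = -∑ z, (schurComplementAt N ℓ)⁻¹ x z * N z ℓ * (N ℓ ℓ)⁻¹ := by
  set A := N.submatrix (Subtype.val : ↥({ℓ}ᶜ : Set V) → V) Subtype.val
  set B := replicateCol Unit fun x : ↥({ℓ}ᶜ : Set V) => N x ℓ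
  set C := replicateRow Unit fun y : ↥({ℓ}ᶜ : Set V) => N ℓ y
  set D : Matrix Unit Unit K := of fun _ _ => N ℓ ℓ
  have := pivotInvertible hℓ
  have : Invertible N := invertibleOfIsUnitDet _ hN.isUnit
  have : Invertible (fromBlocks A B C D) := by
    rw [← submatrix_pivotEquiv]
    exact submatrixEquivInvertible N (pivotEquiv ℓ) (pivotEquiv ℓ)
  have := invertibleOfFromBlocks₂₂Invertible A B C D
  have h := invOf_fromBlocks₂₂_eq A B C D
  simp only [A, B, C, D, invOf_eq_nonsing_inv, ← schurComplementAt_eq_sub,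
    ← submatrix_pivotEquiv, inv_submatrix_equiv] at h
  refine ⟨congrFun (congrFun h (.inl x)) (.inl y), ?_⟩
  have hxℓ : N⁻¹ x ℓ = _ := congrFun (congrFun h (.inl x)) (.inr ())
  simp only [fromBlocks_apply₁₂, neg_apply, mul_apply, Finset.univ_unique,
    Finset.sum_singleton] at hxℓ
  rw [hxℓ, ← Finset.sum_mul]
  simp

lemma adjugate_eq_det_smul_inv (hN : N.det ≠ 0) : N.adjugate = N.det • N⁻¹ := by
  rw [inv_def, Ring.inverse_eq_inv', smul_smul, mul_inv_cancel₀ hN, one_smul]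

lemma adjugate_apply_eq_mul_adjugate_schurComplementAt (hℓ : N ℓ ℓ ≠ 0) (hN : N.det ≠ 0)
    (x y : ↥({ℓ}ᶜ : Set V)) :
    N.adjugate x y = N ℓ ℓ * (schurComplementAt N ℓ).adjugate x y := by
  rw [adjugate_eq_det_smul_inv hN, adjugate_eq_det_smul_inv (det_schurComplementAt_ne_zero hℓ hN),
    smul_apply, smul_apply, smul_eq_mul, smul_eq_mul, (inv_apply_eq_schurComplementAt hℓ hN x y).1,
    det_eq_mul_det_schurComplementAt hℓ, mul_assoc]

lemma adjugate_apply_pivot (hℓ : N ℓ ℓ ≠ 0) (hN : N.det ≠ 0) (x : ↥({ℓ}ᶜ : Set V)) :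
    N.adjugate x ℓ = -∑ z, (schurComplementAt N ℓ).adjugate x z * N z ℓ := by
  rw [adjugate_eq_det_smul_inv hN, adjugate_eq_det_smul_inv (det_schurComplementAt_ne_zero hℓ hN),
    smul_apply, smul_eq_mul, (inv_apply_eq_schurComplementAt hℓ hN x x).2,
    det_eq_mul_det_schurComplementAt hℓ]
  simp only [smul_apply, smul_eq_mul, Finset.mul_sum, mul_neg]
  congr 1
  refine Finset.sum_congr rfl fun z _ => ?_
  field_simp

lemma neg_det_neg_smul_inv (hN : N.det ≠ 0) : -(-N).det • N⁻¹ = (-N).adjugate := by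
  have hneg : (-N).det ≠ 0 := by
    rw [det_neg]
    exact mul_ne_zero (pow_ne_zero _ (neg_ne_zero.mpr one_ne_zero)) hN
  rw [adjugate_eq_det_smul_inv hneg,
    inv_eq_right_inv (A := -N) (B := -N⁻¹) (by rw [neg_mul_neg, mul_nonsing_inv _ hN.isUnit]),
    smul_neg, neg_smul]

end Pivot

lemma adjugate_map_intCast_apply {V R : Type*} [Fintype V] [DecidableEq V] [CommRing R]
    (M : Matrix V V ℤ) (i j : V) :
    (M.map ((↑) : ℤ → R)).adjugate i j = (M.adjugate i j : R) :=
  (congrFun (congrFun ((Int.castRingHom R).map_adjugate M) i) j).symm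

open scoped ComplexOrder in
lemma PosDef.schurComplementAt {V 𝕜 : Type*} [Fintype V] [DecidableEq V] [RCLike 𝕜]
    {N : Matrix V V 𝕜} (hN : N.PosDef) (ℓ : V) : (schurComplementAt N ℓ).PosDef := by
  have hℓ : N ℓ ℓ ≠ 0 := hN.diag_pos.ne'
  have hD : (of fun (_ : Unit) (_ : Unit) => N ℓ ℓ).PosDef :=
    hN.submatrix (e := fun _ : Unit => ℓ) fun _ _ _ => rfl
  have := pivotInvertible hℓ
  have hrow : replicateRow Unit (fun y : ↥({ℓ}ᶜ : Set V) => N ℓ y) =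
      (replicateCol Unit fun x : ↥({ℓ}ᶜ : Set V) => N x ℓ)ᴴ := by
    ext _ y
    simp [← hN.isHermitian.apply ℓ y]
  have hblocks := hN.submatrix (pivotEquiv ℓ).injective
  rw [submatrix_pivotEquiv, hrow] at hblocks
  have hS := (PosDef.fromBlocks₂₂ _ _ hD).mp hblocks.posSemidef
  rw [← hrow, ← schurComplementAt_eq_sub] at hS
  exact hS.posDef_iff_det_ne_zero.mpr (det_schurComplementAt_ne_zero hℓ hN.det_pos.ne')

end Matrix

@[to_additive]
lemma Fintype.prod_eq_mul_prod_compl_singleton {V M : Type*} [Fintype V] [DecidableEq V]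
    [CommMonoid M] (ℓ : V) (f : V → M) : ∏ v, f v = f ℓ * ∏ x : ↥({ℓ}ᶜ : Set V), f x := by
  rw [Fintype.prod_eq_mul_prod_compl ℓ, Finset.prod_set_coe, Set.toFinset_compl,
    Set.toFinset_singleton]

lemma Finset.prod_zpow_eq_zpow_sum {ι G₀ : Type*} [CommGroupWithZero G₀] {a : G₀} (ha : a ≠ 0)
    (s : Finset ι) (f : ι → ℤ) : ∏ i ∈ s, a ^ f i = a ^ ∑ i ∈ s, f i := by
  induction s using Finset.cons_induction with
  | empty => simp
  | cons i s hi ih => rw [prod_cons, sum_cons, zpow_add₀ ha, ih]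

lemma Fintype.prod_zpow_add_ite_eq_mul_prod {ι G₀ : Type*} [Fintype ι] [DecidableEq ι]
    [CommGroupWithZero G₀] {b : ι → G₀} {i₀ : ι} (h : b i₀ ≠ 0) (e : ι → ℤ) :
    ∏ i, b i ^ (e i + if i = i₀ then 1 else 0) = b i₀ * ∏ i, b i ^ e i := by
  calc ∏ i, b i ^ (e i + if i = i₀ then 1 else 0)
      = ∏ i, b i ^ e i * if i = i₀ then b i else 1 := by
        refine Finset.prod_congr rfl fun i _ => ?_
        split_ifs with hi
        · rw [zpow_add₀ (hi ▸ h), zpow_one]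
        · rw [add_zero, mul_one]
    _ = b i₀ * ∏ i, b i ^ e i := by
        rw [Finset.prod_mul_distrib, Fintype.prod_ite_eq', mul_comm]

namespace SimpleGraph

variable {V : Type*} [Fintype V] {G : SimpleGraph V} [DecidableRel G.Adj]

lemma IsTree.sum_degree_sub_two (hG : G.IsTree) : ∑ v, ((G.degree v : ℤ) - 2) = -2 := by
  have hsum := G.sum_degrees_eq_twice_card_edges
  have hcard := hG.card_edgeFinset
  rw [sum_sub_distrib, sum_const, card_univ, nsmul_eq_mul]
  push_cast [← Nat.cast_sum, hsum]
  omega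

lemma IsTree.induce_compl_singleton (hG : G.IsTree) {ℓ : V} (hℓ : G.degree ℓ = 1) :
    (G.induce {ℓ}ᶜ).IsTree :=
  ⟨hG.connected.induce_compl_singleton_of_degree_eq_one hℓ, hG.isAcyclic.induce _⟩

lemma IsTree.exists_ne_degree_eq_one [Nontrivial V] (hG : G.IsTree) (u : V) :
    ∃ ℓ, ℓ ≠ u ∧ G.degree ℓ = 1 := by
  obtain ⟨a, b, hab, ha, hb⟩ := hG.exists_ne_and_degree_eq_one
  by_cases hau : a = u
  · exact ⟨b, fun hbu => hab (hau.trans hbu.symm), hb⟩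
  · exact ⟨a, hau, ha⟩

variable [DecidableEq V]

lemma degree_induce_compl_singleton_add (ℓ : V) (x : ↥({ℓ}ᶜ : Set V)) :
    (G.induce {ℓ}ᶜ).degree x + (if G.Adj x ℓ then 1 else 0) = G.degree x := by
  rw [← card_neighborFinset_eq_degree, ← card_neighborFinset_eq_degree, ← card_map,
    map_neighborFinset_induce, Set.toFinset_compl, Set.toFinset_singleton, ← sdiff_eq_inter_compl,
    ← erase_eq]
  split_ifs with h
  · exact card_erase_add_one ((mem_neighborFinset _ _ _).mpr h)
  · rw [add_zero, erase_eq_of_notMem (by simpa using h)]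

end SimpleGraph

section LeafRemoval

open SimpleGraph Matrix

variable {V : Type*} [DecidableEq V] {G : SimpleGraph V} [DecidableRel G.Adj]
  {K : Type*} [Field K] {N : Matrix V V K} {ℓ : V} {n₀ : ↥({ℓ}ᶜ : Set V)}

lemma leaf_row_col_eq (hN : ∀ u w, u ≠ w → N u w = if G.Adj u w then -1 else 0)
    (hℓ : ∀ x, G.Adj ℓ x ↔ x = n₀) (z : ↥({ℓ}ᶜ : Set V)) :
    (N ℓ z = if z = n₀ then -1 else 0) ∧ (N z ℓ = if z = n₀ then -1 else 0) := by
  have hadj : G.Adj ℓ z ↔ z = n₀ := (hℓ z).trans Subtype.coe_inj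
  rw [hN ℓ z (Ne.symm z.2), hN z ℓ z.2]
  simp only [G.adj_comm _ ℓ, hadj, and_self]

lemma schurComplementAt_apply_of_leaf
    (hN : ∀ u w, u ≠ w → N u w = if G.Adj u w then -1 else 0)
    (hℓ : ∀ x, G.Adj ℓ x ↔ x = n₀) {x y : ↥({ℓ}ᶜ : Set V)} (hxy : x ≠ y) :
    schurComplementAt N ℓ x y = if (G.induce {ℓ}ᶜ).Adj x y then -1 else 0 := by
  simp only [schurComplementAt, of_apply, hN x y (Subtype.coe_ne_coe.mpr hxy), comap_adj,
    Function.Embedding.coe_subtype, (leaf_row_col_eq hN hℓ x).2, (leaf_row_col_eq hN hℓ y).1]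
  split_ifs <;> simp_all

variable [Fintype V]

lemma adjugate_apply_leaf (hN : ∀ u w, u ≠ w → N u w = if G.Adj u w then -1 else 0)
    (hℓ : ∀ x, G.Adj ℓ x ↔ x = n₀) (hℓℓ : N ℓ ℓ ≠ 0) (hdet : N.det ≠ 0)
    (x : ↥({ℓ}ᶜ : Set V)) :
    N.adjugate x ℓ = (schurComplementAt N ℓ).adjugate x n₀ := by
  rw [adjugate_apply_pivot hℓℓ hdet, Fintype.sum_eq_single n₀]
  · simp [(leaf_row_col_eq hN hℓ n₀).2]
  · intro z hz
    simp [(leaf_row_col_eq hN hℓ z).2, hz]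

lemma adjugate_pos_of_leaf [LinearOrder K] [IsStrictOrderedRing K]
    (hN : ∀ u w, u ≠ w → N u w = if G.Adj u w then -1 else 0) (hℓ : ∀ x, G.Adj ℓ x ↔ x = n₀)
    (hℓℓ : 0 < N ℓ ℓ) (hdet : N.det ≠ 0) (u : ↥({ℓ}ᶜ : Set V))
    (hpos : ∀ x, 0 < (schurComplementAt N ℓ).adjugate u x) (w : V) : 0 < N.adjugate u w := by
  by_cases hw : w = ℓ
  · rw [hw, adjugate_apply_leaf hN hℓ hℓℓ.ne' hdet]
    exact hpos n₀
  · rw [show N.adjugate u w = N.adjugate u (⟨w, hw⟩ : ↥({ℓ}ᶜ : Set V)) from rfl,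
      adjugate_apply_eq_mul_adjugate_schurComplementAt hℓℓ.ne' hdet]
    exact mul_pos hℓℓ (hpos _)

lemma adjugate_mul_prod_zpow_of_leaf (hG : G.IsTree)
    (hN : ∀ u w, u ≠ w → N u w = if G.Adj u w then -1 else 0) (hℓ : ∀ x, G.Adj ℓ x ↔ x = n₀)
    (hℓℓ : N ℓ ℓ ≠ 0) (hdet : N.det ≠ 0) (u : ↥({ℓ}ᶜ : Set V))
    (hn₀ : (schurComplementAt N ℓ).adjugate u n₀ ≠ 0) :
    N.adjugate u u * ∏ w, N.adjugate u w ^ ((G.degree w : ℤ) - 2) =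
      (schurComplementAt N ℓ).adjugate u u *
        ∏ x, (schurComplementAt N ℓ).adjugate u x ^ (((G.induce {ℓ}ᶜ).degree x : ℤ) - 2) := by
  set b := (schurComplementAt N ℓ).adjugate u
  set c := N ℓ ℓ
  set e' : ↥({ℓ}ᶜ : Set V) → ℤ := fun x => ((G.induce {ℓ}ᶜ).degree x : ℤ) - 2
  have hdegℓ : G.degree ℓ = 1 :=
    degree_eq_one_iff_existsUnique_adj.mpr ⟨n₀, (hℓ n₀).mpr rfl, fun y hy => (hℓ y).mp hy⟩
  have hdeg (x : ↥({ℓ}ᶜ : Set V)) : (G.degree x : ℤ) - 2 = e' x + if x = n₀ then 1 else 0 := by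
    have := degree_induce_compl_singleton_add (G := G) ℓ x
    simp only [G.adj_comm _ ℓ, hℓ, Subtype.coe_inj] at this
    push_cast [← this]
    ring
  have hsum : ∑ x : ↥({ℓ}ᶜ : Set V), ((G.degree x : ℤ) - 2) = -1 := by
    have := hG.sum_degree_sub_two
    rw [Fintype.sum_eq_add_sum_compl_singleton ℓ, hdegℓ] at this
    omega
  have hshift : ∏ x, b x ^ ((G.degree x : ℤ) - 2) = b n₀ * ∏ x, b x ^ e' x := by
    simp only [hdeg]
    exact Fintype.prod_zpow_add_ite_eq_mul_prod hn₀ e'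
  calc N.adjugate u u * ∏ w, N.adjugate u w ^ ((G.degree w : ℤ) - 2)
      = c * b u * ((b n₀)⁻¹ * ∏ x : ↥({ℓ}ᶜ : Set V), (c * b x) ^ ((G.degree x : ℤ) - 2)) := by
        rw [Fintype.prod_eq_mul_prod_compl_singleton ℓ, adjugate_apply_leaf hN hℓ hℓℓ hdet, hdegℓ]
        simp only [adjugate_apply_eq_mul_adjugate_schurComplementAt hℓℓ hdet]
        norm_num [b, c]
    _ = c * b u * ((b n₀)⁻¹ * (c ^ (-1 : ℤ) * (b n₀ * ∏ x, b x ^ e' x))) := by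
        rw [← hsum, ← Finset.prod_zpow_eq_zpow_sum hℓℓ, ← hshift, ← Finset.prod_mul_distrib]
        simp only [mul_zpow]
    _ = b u * ∏ x, b x ^ e' x := by
        field_simp

end LeafRemoval

open SimpleGraph Matrix in
theorem SimpleGraph.IsTree.adjugate_pos_and_mul_prod_zpow_eq_one {V : Type*} [Fintype V]
    [DecidableEq V] {G : SimpleGraph V} [DecidableRel G.Adj] (hG : G.IsTree) {N : Matrix V V ℝ}
    (hN : ∀ u w, u ≠ w → N u w = if G.Adj u w then -1 else 0) (hpos : N.PosDef) (u : V) :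
    (∀ w, 0 < N.adjugate u w) ∧
      N.adjugate u u * ∏ w, N.adjugate u w ^ ((G.degree w : ℤ) - 2) = 1 := by
  refine Finite.induction_subsingleton_or_nontrivial (P := fun V => ∀ [Fintype V] [DecidableEq V]
    (G : SimpleGraph V) [DecidableRel G.Adj], G.IsTree → ∀ (N : Matrix V V ℝ),
    (∀ u w, u ≠ w → N u w = if G.Adj u w then -1 else 0) → N.PosDef → ∀ u,
    (∀ w, 0 < N.adjugate u w) ∧ N.adjugate u u * ∏ w, N.adjugate u w ^ ((G.degree w : ℤ) - 2) = 1)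
    V ?_ ?_ G hG N hN hpos u
  · intro V _ _ _ _ G _ _ N _ _ u
    have hadj (w : V) : N.adjugate u w = 1 := by
      rw [adjugate_subsingleton, Subsingleton.elim w u, one_apply_eq]
    simp [hadj]
  · intro V _ _ ih _ _ G _ hG N hN hpos u
    obtain ⟨ℓ, hℓu, hℓ⟩ := hG.exists_ne_degree_eq_one u
    obtain ⟨n₀, hℓn₀, hn₀⟩ := degree_eq_one_iff_existsUnique_adj.mp hℓ
    let n₀' : ↥({ℓ}ᶜ : Set V) := ⟨n₀, (G.ne_of_adj hℓn₀).symm⟩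
    have hleaf (x : V) : G.Adj ℓ x ↔ x = n₀' := ⟨hn₀ x, fun h => h ▸ hℓn₀⟩
    have hℓℓ : 0 < N ℓ ℓ := hpos.diag_pos
    have hdet : N.det ≠ 0 := hpos.det_pos.ne'
    obtain ⟨hSpos, hSid⟩ := ih _ (Finite.card_subtype_lt (x := ℓ) (by simp)) (G.induce {ℓ}ᶜ)
      (hG.induce_compl_singleton hℓ) (schurComplementAt N ℓ)
      (fun _ _ => schurComplementAt_apply_of_leaf hN hleaf) (hpos.schurComplementAt ℓ)
      ⟨u, hℓu.symm⟩
    refine ⟨adjugate_pos_of_leaf hN hleaf hℓℓ hdet _ hSpos, ?_⟩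
    rw [← hSid]
    exact adjugate_mul_prod_zpow_of_leaf hG hN hleaf hℓℓ.ne' hdet _ (hSpos n₀').ne'

open Matrix in
theorem stmt10 (V : Type*) [Fintype V] [DecidableEq V]
    (G : SimpleGraph V) [DecidableRel G.Adj] (hG : G.IsTree)
    (I : Matrix V V ℤ)
    (hoff : ∀ u w : V, u ≠ w → I u w = if G.Adj u w then 1 else 0)
    (hneg : Matrix.PosDef ((-I).map ((↑) : ℤ → ℝ)))
    (u : V) :
    (-(((-I).det : ℚ)) * ((I.map ((↑) : ℤ → ℚ))⁻¹ u u)) *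
      ∏ w : V,
        (-(((-I).det : ℚ)) * ((I.map ((↑) : ℤ → ℚ))⁻¹ u w)) ^ ((G.degree w : ℤ) - 2)
      = 1 := by
  have hdet : I.det ≠ 0 := by
    have := hneg.det_pos
    rw [← Int.cast_det, det_neg] at this
    rintro h
    simp [h] at this
  have hI : -I.map ((↑) : ℤ → ℚ) = (-I).map (↑) := by
    ext
    simp
  have ha (w : V) :
      -(((-I).det : ℚ)) * (I.map ((↑) : ℤ → ℚ))⁻¹ u w = ((-I).adjugate u w : ℚ) := by
    have := congrFun (congrFun (neg_det_neg_smul_inv (N := I.map ((↑) : ℤ → ℚ))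
      (by rw [← Int.cast_det]; exact_mod_cast hdet)) u) w
    rwa [hI, ← Int.cast_det, adjugate_map_intCast_apply, Matrix.smul_apply, smul_eq_mul] at this
  have hN (v w : V) (hvw : v ≠ w) :
      ((-I).map ((↑) : ℤ → ℝ)) v w = if G.Adj v w then -1 else 0 := by
    simp [hoff v w hvw, apply_ite]
  have key := (hG.adjugate_pos_and_mul_prod_zpow_eq_one hN hneg u).2
  simp only [adjugate_map_intCast_apply] at key
  simp only [ha]
  apply Rat.cast_injective (α := ℝ)
  push_cast
  exact key
end

section
/- Let Γ be a finite negative definite tree with lattice L = ⊕_w ℤE_w carrying the intersection form, dual lattice L' with dual basis E*_w, and a fixed vertex v. Let Γ_i be the components of Γ ∖ v, and for x ∈ L' let x_i = R_i(x) ∈ L'_i be the restriction characterized by (x_i, E_w) = (x, E_w) for all w ∈ V(Γ_i). Set d = det(-I) and a_{vv} = -d·(I^{-1})_{vv}. Then x − Σ_i x_i = −(d·(x, E*_v)/a_{vv})·E*_v in L' ⊗ ℚ (where each L'_i is included in L' ⊗ ℚ via the orthogonal-extension identification). -/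
/-!
Write `J` for the intersection matrix over `ℚ`. Since `x - y` pairs to zero with every `E_w`,
`w ≠ v`, the covector `(x - y) ᵥ* J` is a multiple of `E_v`, so `x - y = c • E*_v`. Evaluating
at `v`, where `y` vanishes, gives `c = x_v / (J⁻¹)_{vv}`, and `(x, E*_v)` is the coordinate `x_v`.
Negative definiteness makes `J` symmetric and gives `d ≠ 0` and `(J⁻¹)_{vv} < 0`, so both
denominators are nonzero.
-/

open Matrix

namespace Matrix

theorem PosDef.of_map_ratCast {n : Type*} [Fintype n] {B : Matrix n n ℚ}
    (hB : (B.map ((↑) : ℚ → ℝ)).PosDef) : B.PosDef := by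
  refine .of_dotProduct_mulVec_pos ?_ fun x hx ↦ ?_
  · ext i j
    have := hB.isHermitian.apply i j
    simp only [map_apply, star_trivial, Rat.cast_inj] at this
    simp [conjTranspose_apply, this]
  · have hx' : ((↑) ∘ x : n → ℝ) ≠ 0 := fun h ↦ hx <| funext fun i ↦ by
      simpa using congrFun h i
    have hcast : ((star x ⬝ᵥ B *ᵥ x : ℚ) : ℝ)
        = star ((↑) ∘ x) ⬝ᵥ B.map ((↑) : ℚ → ℝ) *ᵥ ((↑) ∘ x) := by
      simp only [dotProduct, mulVec, star_trivial, map_apply, Function.comp_apply, Rat.cast_sum,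
        Rat.cast_mul]
    exact_mod_cast hcast ▸ hB.dotProduct_mulVec_pos hx'

variable {K n : Type*} [Field K] [Fintype n] [DecidableEq n] {A : Matrix n n K} {v : n}

theorem eq_smul_inv_row_of_vecMul_apply_eq_zero (hA : IsUnit A.det) {z : n → K}
    (hz : ∀ w, w ≠ v → (z ᵥ* A) w = 0) : z = (z ᵥ* A) v • A⁻¹ v := by
  have hsingle : z ᵥ* A = Pi.single v ((z ᵥ* A) v) := by
    ext w
    by_cases h : w = v
    · simp [h]
    · simp [h, hz w h]
  calc z = z ᵥ* A ᵥ* A⁻¹ := by rw [vecMul_vecMul, mul_nonsing_inv _ hA, vecMul_one]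
    _ = (z ᵥ* A) v • A⁻¹ v := by
      conv_lhs => rw [hsingle, single_vecMul]
      rfl

theorem sub_eq_smul_mulVec_single_of_dotProduct_eq (hAt : Aᵀ = A) (hA : IsUnit A.det)
    (hv : A⁻¹ v v ≠ 0) {x y : n → K} (hy : y v = 0)
    (hxy : ∀ w, w ≠ v → y ⬝ᵥ (A *ᵥ Pi.single w 1) = x ⬝ᵥ (A *ᵥ Pi.single w 1)) :
    x - y = (x v / A⁻¹ v v) • (A⁻¹ *ᵥ Pi.single v 1) := by
  have hz : ∀ w, w ≠ v → ((x - y) ᵥ* A) w = 0 := fun w hw ↦ by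
    have := hxy w hw
    rw [dotProduct_mulVec, dotProduct_mulVec, dotProduct_single_one, dotProduct_single_one] at this
    rw [sub_vecMul, Pi.sub_apply, this, sub_self]
  have hrow : A⁻¹ *ᵥ Pi.single v 1 = A⁻¹ v := by
    ext u
    rw [mulVec_single_one, col_apply, ← transpose_apply A⁻¹, transpose_nonsing_inv, hAt]
  have h := eq_smul_inv_row_of_vecMul_apply_eq_zero hA hz
  have hc : (x - y) v = ((x - y) ᵥ* A) v * A⁻¹ v v := by simpa using congrFun h v
  rw [hrow, Pi.sub_apply, hy, sub_zero] at *
  rw [hc, mul_div_cancel_right₀ _ hv]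
  exact h

end Matrix

theorem stmt12_general (V : Type*) [Fintype V] [DecidableEq V]
    (I : Matrix V V ℤ)
    (hneg : Matrix.PosDef ((-I).map ((↑) : ℤ → ℝ)))
    (v : V)
    -- `d = det (-I)` and `a_{vv} = -d (I⁻¹)_{vv}`
    (dd : ℚ) (hdd : dd = (((-I).det : ℤ) : ℚ))
    (av : ℚ) (hav : av = -dd * ((I.map ((↑) : ℤ → ℚ))⁻¹ v v))
    -- `e = E^*_v`, the dual basis vector at `v`
    (e : V → ℚ) (he : e = (I.map ((↑) : ℤ → ℚ))⁻¹ *ᵥ Pi.single v 1)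
    (x y : V → ℚ)
    -- `y = ∑ i x_i` is the sum of the restrictions of `x` to the components of
    -- `Γ ∖ v`: it is supported away from `v` and pairs with each `E_w`, `w ≠ v`,
    -- exactly as `x` does
    (hy0 : y v = 0)
    (hyw : ∀ w : V, w ≠ v →
      y ⬝ᵥ ((I.map ((↑) : ℤ → ℚ)) *ᵥ Pi.single w 1)
        = x ⬝ᵥ ((I.map ((↑) : ℤ → ℚ)) *ᵥ Pi.single w 1)) :
    x - y = (-(dd * (x ⬝ᵥ ((I.map ((↑) : ℤ → ℚ)) *ᵥ e))) / av) • e := by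
  set J := I.map ((↑) : ℤ → ℚ)
  have hIJ : (-I).map ((↑) : ℤ → ℚ) = -J := by ext; simp [J]
  have hJ : (-J).PosDef := .of_map_ratCast (by convert hneg using 1; ext; simp [J])
  have hJt : Jᵀ = J := by
    simpa [conjTranspose_eq_transpose_of_trivial] using hJ.isHermitian.eq
  have hunit : IsUnit J.det := (isUnit_iff_isUnit_det J).mp <| (IsUnit.neg_iff J).mp hJ.isUnit
  have hinv : (-J)⁻¹ = -J⁻¹ := inv_eq_right_inv (by rw [neg_mul_neg, mul_nonsing_inv _ hunit])
  have hv : J⁻¹ v v < 0 := by simpa [hinv] using hJ.inv.diag_pos (i := v)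
  have hdd0 : dd ≠ 0 := by
    rw [hdd, Int.cast_det, hIJ]
    exact ((isUnit_iff_isUnit_det _).mp hJ.isUnit).ne_zero
  have hpair : x ⬝ᵥ (J *ᵥ e) = x v := by
    rw [he, mulVec_mulVec, mul_nonsing_inv _ hunit, one_mulVec, dotProduct_single_one]
  rw [sub_eq_smul_mulVec_single_of_dotProduct_eq hJt hunit hv.ne hy0 hyw, hpair, hav, ← he]
  congr 1
  field_simp

theorem stmt12 (V : Type*) [Fintype V] [DecidableEq V]
    (G : SimpleGraph V) [DecidableRel G.Adj] (hG : G.IsTree)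
    (I : Matrix V V ℤ)
    (hoff : ∀ u w : V, u ≠ w → I u w = if G.Adj u w then 1 else 0)
    (hneg : Matrix.PosDef ((-I).map ((↑) : ℤ → ℝ)))
    (v : V)
    -- `d = det (-I)` and `a_{vv} = -d (I⁻¹)_{vv}`
    (dd : ℚ) (hdd : dd = (((-I).det : ℤ) : ℚ))
    (av : ℚ) (hav : av = -dd * ((I.map ((↑) : ℤ → ℚ))⁻¹ v v))
    -- `e = E^*_v`, the dual basis vector at `v`
    (e : V → ℚ) (he : e = (I.map ((↑) : ℤ → ℚ))⁻¹ *ᵥ Pi.single v 1)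
    (x y : V → ℚ)
    -- `y = ∑ i x_i` is the sum of the restrictions of `x` to the components of
    -- `Γ ∖ v`: it is supported away from `v` and pairs with each `E_w`, `w ≠ v`,
    -- exactly as `x` does
    (hy0 : y v = 0)
    (hyw : ∀ w : V, w ≠ v →
      y ⬝ᵥ ((I.map ((↑) : ℤ → ℚ)) *ᵥ Pi.single w 1)
        = x ⬝ᵥ ((I.map ((↑) : ℤ → ℚ)) *ᵥ Pi.single w 1)) :
    x - y = (-(dd * (x ⬝ᵥ ((I.map ((↑) : ℤ → ℚ)) *ᵥ e))) / av) • e :=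
  stmt12_general V I hneg v dd hdd av hav e he x y hy0 hyw
end

section
/- With the setup of the previous statement (negative definite tree Γ, distinguished vertex v, components Γ_i of Γ∖v, restrictions x_i of x ∈ L'), one has x² − Σ_i x_i² = −d·(x, E*_v)²/a_{vv}, where x² denotes the self-intersection (x,x) in L'⊗ℚ, x_i² is computed with the form of Γ_i, d = det(-I), and a_{vv} = -d·(I^{-1})_{vv}. -/
open BigOperators Matrix

theorem stmt13 (V : Type*) [Fintype V] [DecidableEq V]
    (G : SimpleGraph V) [DecidableRel G.Adj] (hG : G.IsTree)
    (I : Matrix V V ℤ)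
    (hoff : ∀ u w : V, u ≠ w → I u w = if G.Adj u w then 1 else 0)
    (hneg : Matrix.PosDef ((-I).map ((↑) : ℤ → ℝ)))
    (v : V)
    -- `d = det (-I)` and `a_{vv} = -d (I⁻¹)_{vv}`
    (dd : ℚ) (hdd : dd = (((-I).det : ℤ) : ℚ))
    (av : ℚ) (hav : av = -dd * ((I.map ((↑) : ℤ → ℚ))⁻¹ v v))
    -- `e = E^*_v`, the dual basis vector at `v`
    (e : V → ℚ) (he : e = (I.map ((↑) : ℤ → ℚ))⁻¹ *ᵥ Pi.single v 1)
    (x y : V → ℚ)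
    -- `y = ∑ i x_i` is the sum of the restrictions of `x` to the components of
    -- `Γ ∖ v`; note that `∑ i x_i² = (y, y)` since distinct components are
    -- orthogonal
    (hy0 : y v = 0)
    (hyw : ∀ w : V, w ≠ v →
      y ⬝ᵥ ((I.map ((↑) : ℤ → ℚ)) *ᵥ Pi.single w 1)
        = x ⬝ᵥ ((I.map ((↑) : ℤ → ℚ)) *ᵥ Pi.single w 1)) :
    x ⬝ᵥ ((I.map ((↑) : ℤ → ℚ)) *ᵥ x) - y ⬝ᵥ ((I.map ((↑) : ℤ → ℚ)) *ᵥ y)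
      = -(dd * (x ⬝ᵥ ((I.map ((↑) : ℤ → ℚ)) *ᵥ e)) ^ 2) / av := by
  set A : Matrix V V ℚ := I.map ((↑) : ℤ → ℚ) with hAdef
  -- symmetry of A
  have hsymm : Aᵀ = A := by
    ext u w
    simp only [transpose_apply, hAdef, Matrix.map_apply]
    rcases eq_or_ne u w with h | h
    · rw [h]
    · rw [hoff u w h, hoff w u h.symm]
      by_cases hadj : G.Adj u w
      · simp [hadj, hadj.symm]
      · have h2 : ¬ G.Adj w u := fun h' => hadj h'.symm
        simp [hadj, h2]
  -- determinant facts
  have hdetnegI : (-I).det ≠ 0 := by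
    have h1 : (0 : ℝ) < ((-I).map ((↑) : ℤ → ℝ)).det := hneg.det_pos
    have h2 : ((-I).map ((↑) : ℤ → ℝ)).det = (((-I).det : ℤ) : ℝ) :=
      (RingHom.map_det (Int.castRingHom ℝ) (-I)).symm
    rw [h2] at h1
    exact_mod_cast h1.ne'
  have hdetI : I.det ≠ 0 := by
    intro h
    apply hdetnegI
    rw [Matrix.det_neg, h, mul_zero]
  have hdet : IsUnit A.det := by
    have : A.det = ((I.det : ℤ) : ℚ) := (RingHom.map_det (Int.castRingHom ℚ) I).symm
    rw [this]
    exact isUnit_iff_ne_zero.2 (by exact_mod_cast hdetI)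
  have hdd0 : dd ≠ 0 := by
    rw [hdd]
    exact_mod_cast hdetnegI
  have hAAinv : A * A⁻¹ = 1 := Matrix.mul_nonsing_inv A hdet
  have hAinvA : A⁻¹ * A = 1 := Matrix.nonsing_inv_mul A hdet
  -- A *ᵥ e = Pi.single v 1
  have hAe : A *ᵥ e = Pi.single v 1 := by
    rw [he, Matrix.mulVec_mulVec, hAAinv, Matrix.one_mulVec]
  have hxAe : x ⬝ᵥ (A *ᵥ e) = x v := by
    rw [hAe, dotProduct_single, mul_one]
  -- z := x - y
  set z : V → ℚ := x - y with hz
  have hAz : ∀ w : V, w ≠ v → (A *ᵥ z) w = 0 := by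
    intro w hw
    have h := hyw w hw
    have key : ∀ u : V → ℚ, u ⬝ᵥ (A *ᵥ Pi.single w 1) = (A *ᵥ u) w := by
      intro u
      rw [dotProduct_mulVec, ← Matrix.mulVec_transpose, hsymm,
        dotProduct_single, mul_one]
    rw [key y, key x] at h
    have : (A *ᵥ z) w = (A *ᵥ x) w - (A *ᵥ y) w := by
      simp [hz, Matrix.mulVec_sub, Pi.sub_apply]
    rw [this, h, sub_self]
  set c : ℚ := (A *ᵥ z) v with hc
  have hAzc : A *ᵥ z = c • (Pi.single v 1 : V → ℚ) := by
    funext w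
    rcases eq_or_ne w v with h | h
    · rw [h]; simp [hc]
    · rw [hAz w h]
      simp [Pi.single_apply, h]
  have hzce : z = c • e := by
    have h1 : A⁻¹ *ᵥ (A *ᵥ z) = z := by
      rw [Matrix.mulVec_mulVec, hAinvA, Matrix.one_mulVec]
    rw [← h1, hAzc, Matrix.mulVec_smul, he]
  have hzv : z v = x v := by simp [hz, hy0]
  have hxv : x v = c * e v := by
    rw [← hzv, hzce]; simp
  -- the difference equals c * x v
  have hdiff : x ⬝ᵥ (A *ᵥ x) - y ⬝ᵥ (A *ᵥ y) = c * x v := by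
    have hxz : x ⬝ᵥ (A *ᵥ x) - y ⬝ᵥ (A *ᵥ x) = z ⬝ᵥ (A *ᵥ x) := by
      rw [hz]; simp [sub_dotProduct]
    have hsym2 : ∀ u w : V → ℚ, u ⬝ᵥ (A *ᵥ w) = w ⬝ᵥ (A *ᵥ u) := by
      intro u w
      rw [dotProduct_mulVec, ← Matrix.mulVec_transpose, hsymm, dotProduct_comm]
    calc x ⬝ᵥ (A *ᵥ x) - y ⬝ᵥ (A *ᵥ y)
        = (x ⬝ᵥ (A *ᵥ x) - y ⬝ᵥ (A *ᵥ x)) + (y ⬝ᵥ (A *ᵥ x) - y ⬝ᵥ (A *ᵥ y)) := by ring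
      _ = z ⬝ᵥ (A *ᵥ x) + y ⬝ᵥ (A *ᵥ z) := by
          rw [hxz, hz, Matrix.mulVec_sub]; simp [dotProduct_sub]
      _ = x ⬝ᵥ (A *ᵥ z) + y ⬝ᵥ (A *ᵥ z) := by rw [hsym2 z x]
      _ = c * x v := by
          rw [hAzc]
          simp [dotProduct_smul, dotProduct_single, hy0, mul_comm]
  rw [hdiff, hxAe]
  -- now pure algebra
  have hev : e v = A⁻¹ v v := by rw [he]; simp [Matrix.mulVec_single]
  rw [hav, ← hev, hxv]
  rcases eq_or_ne (e v) 0 with h0 | h0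
  · simp [h0]
  · field_simp
end

section
/- Let Γ be a finite negative definite tree with a vertex v, let Γ_i be a component of Γ∖v, and let v_i be the unique vertex of Γ_i adjacent to v. With a_{vw} = -det(-I)·(I^{-1})_{vw} for Γ and a_{v_i w, i} the analogous quantity for Γ_i, for every vertex w of Γ_i one has a_{vw} = a_{v_i w, i} · det(Γ ∖ v ∖ Γ_i), where det of a graph is the determinant of the negative of its intersection matrix and det(∅) = 1. -/
/-!
Let `M` be the intersection matrix over `ℚ`. Since `Γᵢ` meets the rest of `Γ` only in the
edge `v vᵢ`, the rows of `M` indexed by `Γᵢ`, applied to the column of `M⁻¹` at `v`, give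
`M_{Γᵢ} (M⁻¹)_{Γᵢ,v} = -(M⁻¹)_{vv} e_{vᵢ}`; by symmetry
`(M⁻¹)_{vw} = -(M⁻¹)_{vv} (M_{Γᵢ}⁻¹)_{vᵢw}`. The diagonal entry `(M⁻¹)_{vv}` is the cofactor
`det M_{Γ∖v} / det M`, and `M_{Γ∖v}` is block diagonal with blocks `Γᵢ` and `Γ ∖ v ∖ Γᵢ`.
Negative definiteness makes all determinants nonzero, and the signs of `det (-·)` match
because `|Γ| = |Γᵢ| + |Γ ∖ v ∖ Γᵢ| + 1`.
-/

open BigOperators Matrix Finset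

namespace SimpleGraph

variable {V : Type*} {G : SimpleGraph V}

theorem IsAcyclic.eq_of_adj_of_connected_induce (hG : G.IsAcyclic) {S : Set V}
    (hS : (G.induce S).Connected) {v a b : V} (hv : v ∉ S) (ha : a ∈ S) (hb : b ∈ S)
    (hva : G.Adj v a) (hvb : G.Adj v b) : a = b := by
  classical
  obtain ⟨q⟩ := hS.preconnected ⟨a, ha⟩ ⟨b, hb⟩
  let p := q.toPath.1.map (Embedding.induce (G := G) S).toHom
  have hp : p.IsPath := q.toPath.2.map (Embedding.induce (G := G) S).injective
  have hvp : v ∉ p.support := by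
    rw [Walk.support_map, List.mem_map]
    rintro ⟨x, -, rfl⟩
    exact hv x.2
  have hb := hG.eq_snd_of_adj_start ((Walk.cons_isPath_iff hva p).2 ⟨hp, hvp⟩) hvb
    (Walk.end_mem_support _)
  exact (hb.trans (Walk.snd_cons p hva)).symm

end SimpleGraph

namespace Matrix

variable {V R K : Type*} [DecidableEq V]

abbrev principalSubmatrix (M : Matrix V V R) (S : Finset V) : Matrix S S R :=
  M.submatrix (↑) (↑)

theorem det_updateRow_single_self [Fintype V] [CommRing R] (M : Matrix V V R) (v : V) :
    (M.updateRow v (Pi.single v 1)).det = (M.principalSubmatrix (univ.erase v)).det := by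
  rw [twoBlockTriangular_det _ (· ∈ univ.erase v)]
  · have hcompl : toSquareBlockProp (M.updateRow v (Pi.single v 1)) (· ∉ univ.erase v) = 1 := by
      ext ⟨i, hi⟩ ⟨j, hj⟩
      simp only [mem_erase, mem_univ, and_true, not_not] at hi hj
      subst hi hj
      simp [toSquareBlockProp]
    have hblock : toSquareBlockProp (M.updateRow v (Pi.single v 1)) (· ∈ univ.erase v) =
        M.principalSubmatrix (univ.erase v) := by
      ext i j
      exact congr_fun (updateRow_ne (ne_of_mem_erase i.2) : M.updateRow v (Pi.single v 1) i = M i) j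
    rw [hcompl, det_one, mul_one, hblock]
    -- the two sides differ only in the `Fintype` instance on `univ.erase v`
    convert rfl
  · intro i hi j hj
    simp only [mem_erase, mem_univ, and_true, not_not] at hi hj
    simp [hi, hj]

theorem inv_apply_self [Fintype V] [Field K] (M : Matrix V V K) (v : V) :
    M⁻¹ v v = M.det⁻¹ * (M.principalSubmatrix (univ.erase v)).det := by
  rw [inv_def, smul_apply, adjugate_apply, det_updateRow_single_self, Ring.inverse_eq_inv',
    smul_eq_mul]

theorem det_principalSubmatrix_union [CommRing R] (M : Matrix V V R) {S T : Finset V}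
    (hST : Disjoint S T) (h : ∀ s ∈ S, ∀ t ∈ T, M s t = 0) :
    (M.principalSubmatrix (S ∪ T)).det =
      (M.principalSubmatrix S).det * (M.principalSubmatrix T).det := by
  let e := Equiv.Finset.union S T hST
  have hblock : (M.principalSubmatrix (S ∪ T)).submatrix e e =
      fromBlocks (M.principalSubmatrix S) 0 (M.submatrix (↑) (↑)) (M.principalSubmatrix T) := by
    ext (i | i) (j | j)
    · rfl
    · exact h i i.2 j j.2
    · rfl
    · rfl
  rw [← det_submatrix_equiv_self e, hblock, det_fromBlocks_zero₁₂]

theorem principalSubmatrix_mulVec_inv_col [Fintype V] [Field K] {M : Matrix V V K}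
    (hM : IsUnit M.det) {S : Finset V} {v : V} (hv : v ∉ S)
    (hS : ∀ s ∈ S, ∀ u ∉ insert v S, M s u = 0) :
    M.principalSubmatrix S *ᵥ (fun s : S => M⁻¹ s v) = -M⁻¹ v v • fun s : S => M s v := by
  ext s
  have h := congr_fun (congr_fun (mul_nonsing_inv M hM) s) v
  rw [one_apply_ne (ne_of_mem_of_not_mem s.2 hv), mul_apply,
    ← sum_subset (subset_univ (insert v S)) fun u _ hu => by rw [hS s s.2 u hu, zero_mul],
    sum_insert hv, ← sum_coe_sort S] at h
  simp only [mulVec, dotProduct, submatrix_apply, Pi.smul_apply, smul_eq_mul]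
  linear_combination h

theorem det_mul_inv_apply_eq_of_isSymm [Fintype V] [Field K] {M : Matrix V V K} (hM : M.IsSymm)
    (hdet : M.det ≠ 0) {S : Finset V} {v : V} (hv : v ∉ S)
    (hS : ∀ s ∈ S, ∀ u ∉ insert v S, M s u = 0) (hSdet : (M.principalSubmatrix S).det ≠ 0)
    {vi : S} (hcol : ∀ s : S, M s v = (Pi.single vi 1 : S → K) s) (w : S) :
    M.det * M⁻¹ v w = -((M.principalSubmatrix S).det *
      (M.principalSubmatrix (univ \ insert v S)).det * (M.principalSubmatrix S)⁻¹ vi w) := by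
  set A := M.principalSubmatrix S
  set T := univ \ insert v S
  have hcolumn : (fun s : S => M⁻¹ s v) = -M⁻¹ v v • A⁻¹ *ᵥ Pi.single vi 1 := by
    rw [← mulVec_smul, ← funext hcol, ← principalSubmatrix_mulVec_inv_col hdet.isUnit hv hS,
      mulVec_mulVec, nonsing_inv_mul _ hSdet.isUnit, one_mulVec]
  have hsplit : univ.erase v = S ∪ T := by
    ext u
    by_cases hu : u ∈ S
    · simp [T, hu, ne_of_mem_of_not_mem hu hv]
    · simp [T, hu]
  have hdiag : M⁻¹ v v = M.det⁻¹ * (A.det * (M.principalSubmatrix T).det) := by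
    rw [inv_apply_self, hsplit, det_principalSubmatrix_union _
      (disjoint_sdiff.mono_left (subset_insert v S)) fun s hs t ht => hS s hs t (mem_sdiff.1 ht).2]
  have hvw : M⁻¹ v w = -M⁻¹ v v * A⁻¹ vi w := by
    rw [hM.inv.apply w v, congr_fun hcolumn w, mulVec_single_one, Pi.smul_apply, col_apply,
      smul_eq_mul, (hM.submatrix _).inv.apply vi w]
  rw [hvw, hdiag]
  field_simp

theorem intCast_det_neg {n : Type*} [Fintype n] [DecidableEq n] [CommRing R]
    (A : Matrix n n ℤ) :
    (((-A).det : ℤ) : R) = (-1) ^ Fintype.card n * (A.map ((↑) : ℤ → R)).det := by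
  rw [det_neg, Int.cast_mul, Int.cast_pow, Int.cast_neg, Int.cast_one, Int.cast_det]

theorem det_map_intCast_ne_zero_of_posDef_neg {n : Type*} [Fintype n] [DecidableEq n]
    {A : Matrix n n ℤ} (hA : ((-A).map ((↑) : ℤ → ℝ)).PosDef) :
    (A.map ((↑) : ℤ → ℚ)).det ≠ 0 := by
  have h := hA.det_pos.ne'
  rw [← Int.cast_det, Int.cast_ne_zero, det_neg] at h
  rw [← Int.cast_det, Int.cast_ne_zero]
  exact right_ne_zero_of_mul h

end Matrix

/-- The determinant of the negative of the principal submatrix of `I` on the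
vertex set `S` (with the convention `det ∅ = 1`). -/
def gdet {V : Type*} [Fintype V] [DecidableEq V] (I : Matrix V V ℤ) (S : Finset V) : ℤ :=
  Matrix.det (Matrix.of fun i j : {x : V // x ∈ S} => -I i.1 j.1)

theorem stmt14 (V : Type*) [Fintype V] [DecidableEq V]
    (G : SimpleGraph V) [DecidableRel G.Adj] (hG : G.IsTree)
    (I : Matrix V V ℤ)
    (hoff : ∀ u w : V, u ≠ w → I u w = if G.Adj u w then 1 else 0)
    (hneg : Matrix.PosDef ((-I).map ((↑) : ℤ → ℝ)))
    (v : V) (S : Finset V)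
    -- `S` is the vertex set of a connected component `Γᵢ` of `Γ ∖ v`
    (hvS : v ∉ S)
    (hconn : (G.induce (↑S : Set V)).Connected)
    (hclosed : ∀ s ∈ S, ∀ x : V, G.Adj s x → x = v ∨ x ∈ S)
    -- `vᵢ` is the unique vertex of `Γᵢ` adjacent to `v`
    (vi : V) (hvi : vi ∈ S) (hadj : G.Adj v vi)
    (w : V) (hw : w ∈ S) :
    -(((-I).det : ℚ)) * ((I.map ((↑) : ℤ → ℚ))⁻¹ v w)
      = (-((((Matrix.of fun i j : {x : V // x ∈ S} => -I i.1 j.1).det : ℤ) : ℚ)) *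
          (((Matrix.of fun i j : {x : V // x ∈ S} => ((I i.1 j.1 : ℤ) : ℚ)))⁻¹
            ⟨vi, hvi⟩ ⟨w, hw⟩))
        * ((gdet I (Finset.univ \ insert v S) : ℤ) : ℚ) := by
  set M : Matrix V V ℚ := I.map (↑)
  set T := univ \ insert v S
  have hsymm : I.IsSymm := IsSymm.ext fun u u' => by
    rcases eq_or_ne u u' with rfl | h
    · rfl
    · simp only [hoff u' u h.symm, hoff u u' h, G.adj_comm]
  have hS : ∀ s ∈ S, ∀ u ∉ insert v S, M s u = 0 := by
    intro s hs u hu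
    rw [mem_insert, not_or] at hu
    simp only [M, map_apply, hoff s u (ne_of_mem_of_not_mem hs hu.2), Int.cast_eq_zero,
      ite_eq_right_iff, one_ne_zero, imp_false]
    exact fun hsu => (hclosed s hs u hsu).elim hu.1 hu.2
  have hcol : ∀ s : S, M s v = (Pi.single ⟨vi, hvi⟩ 1 : S → ℚ) s := by
    rintro ⟨s, hs⟩
    have hsvi : G.Adj s v ↔ s = vi :=
      ⟨fun h => hG.isAcyclic.eq_of_adj_of_connected_induce hconn hvS hs hvi h.symm hadj,
        fun h => h ▸ hadj.symm⟩
    simp [M, hoff s v (ne_of_mem_of_not_mem hs hvS), Pi.single_apply, hsvi]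
  have hcard : Fintype.card V = S.card + T.card + 1 := by
    rw [← card_univ, ← card_sdiff_add_card_eq_card (subset_univ (insert v S)),
      card_insert_of_notMem hvS]
    ring
  have key := det_mul_inv_apply_eq_of_isSymm (hsymm.map _)
    (det_map_intCast_ne_zero_of_posDef_neg hneg) hvS hS
    (det_map_intCast_ne_zero_of_posDef_neg (hneg.submatrix Subtype.val_injective)) hcol ⟨w, hw⟩
  change -(((-I).det : ℤ) : ℚ) * M⁻¹ v w =
    (-(((-I.principalSubmatrix S).det : ℤ) : ℚ) * (M.principalSubmatrix S)⁻¹ ⟨vi, hvi⟩ ⟨w, hw⟩) *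
      (((-I.principalSubmatrix T).det : ℤ) : ℚ)
  have hmap (U : Finset V) : (I.principalSubmatrix U).map (↑) = M.principalSubmatrix U := rfl
  rw [intCast_det_neg, intCast_det_neg, intCast_det_neg, hmap, hmap, hcard, Fintype.card_coe,
    Fintype.card_coe]
  linear_combination (-1) ^ S.card * (-1) ^ T.card * key
end

section
/- Let d ≥ 1, 0 ≤ q < d, and let Δ(t) ∈ ℤ[t] be a polynomial with Δ(1) = 1, written as Δ(t) = 1 + (t−1)·m + (t−1)²·Σ_l a_l t^l for some integer m (so m = Δ'(1)) and integers a_l. Then the polynomial part of the rational function H(t) = (1/d)·Σ_{ξ^d=1} ξ^{−q}·Δ(ξt)/(1 − ξt)² equals Σ_l a_{q+ld} t^{q+ld}, where the sum is over l ≥ 0 with q + ld in the support of (a_l). -/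
open BigOperators Filter Polynomial Bornology Finset

/-! Since `Δ(w) / (1 - w)² = (1 - w)⁻² - m (1 - w)⁻¹ + Σ_l a_l w^l` for `w ≠ 1`, the average defining
`H(t)` splits into the average of `ξ^(-q) Σ_l a_l (ξ t)^l`, which by orthogonality of the characters
`ξ ↦ ξ^l` of the group of `d`-th roots of unity keeps exactly the monomials with `l ≡ q (mod d)`,
and terms in `(1 - ξ t)⁻¹` that tend to `0` as `t → ∞`. -/

section RootsOfUnity

variable {K : Type*} [Field K] {d : ℕ} {ζ : K}

theorem IsPrimitiveRoot.sum_nthRootsFinset_one_zpow (hζ : IsPrimitiveRoot ζ d) (hd : 0 < d)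
    (n : ℤ) : ∑ ξ ∈ nthRootsFinset d (1 : K), ξ ^ n = if (d : ℤ) ∣ n then (d : K) else 0 := by
  split_ifs with hdvd
  · obtain ⟨k, rfl⟩ := hdvd
    have hξ : ∀ ξ ∈ nthRootsFinset d (1 : K), ξ ^ ((d : ℤ) * k) = 1 := fun ξ hξ => by
      rw [zpow_mul, zpow_natCast, (Polynomial.mem_nthRootsFinset hd 1).1 hξ, one_zpow]
    rw [sum_congr rfl hξ, sum_const, hζ.card_nthRootsFinset, nsmul_one]
  · have hζ0 : ζ ≠ 0 := hζ.ne_zero hd.ne'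
    -- multiplication by `ζ` permutes the `d`-th roots of unity
    have hinv : ∑ ξ ∈ nthRootsFinset d (1 : K), ξ ^ n
        = ζ ^ n * ∑ ξ ∈ nthRootsFinset d (1 : K), ξ ^ n := by
      rw [mul_sum]
      refine sum_nbij' (ζ⁻¹ * ·) (ζ * ·) ?_ ?_ ?_ ?_ ?_
      all_goals intro ξ hξ
      · simp_all [Polynomial.mem_nthRootsFinset hd, mul_pow, hζ.pow_eq_one]
      · simp_all [Polynomial.mem_nthRootsFinset hd, mul_pow, hζ.pow_eq_one]
      · simp [hζ0]
      · simp [hζ0]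
      · simp [mul_zpow, zpow_ne_zero n hζ0]
    have hζn : ζ ^ n - 1 ≠ 0 := sub_ne_zero.2 fun h => hdvd ((hζ.zpow_eq_one_iff_dvd n).1 h)
    exact (mul_eq_zero.1 (by linear_combination -hinv :
      (ζ ^ n - 1) * ∑ ξ ∈ nthRootsFinset d (1 : K), ξ ^ n = 0)).resolve_left hζn

theorem IsPrimitiveRoot.sum_nthRootsFinset_one_inv_pow_mul_pow (hζ : IsPrimitiveRoot ζ d)
    {q : ℕ} (hq : q < d) (l : ℕ) :
    ∑ ξ ∈ nthRootsFinset d (1 : K), ξ⁻¹ ^ q * ξ ^ l = if l % d = q then (d : K) else 0 := by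
  have hpow : ∀ ξ ∈ nthRootsFinset d (1 : K), ξ⁻¹ ^ q * ξ ^ l = ξ ^ ((l : ℤ) - q) := fun ξ hξ => by
    rw [zpow_sub₀ (ne_zero_of_mem_nthRootsFinset one_ne_zero hξ), zpow_natCast, zpow_natCast,
      inv_pow, inv_mul_eq_div]
  simp only [sum_congr rfl hpow, hζ.sum_nthRootsFinset_one_zpow (by omega), ← Nat.modEq_iff_dvd,
    Nat.ModEq, Nat.mod_eq_of_lt hq, eq_comm]

theorem IsPrimitiveRoot.sum_nthRootsFinset_one_inv_pow_mul_sum (hζ : IsPrimitiveRoot ζ d)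
    {q : ℕ} (hq : q < d) (s : Finset ℕ) (c : ℕ → K) (z : K) :
    ∑ ξ ∈ nthRootsFinset d (1 : K), ξ⁻¹ ^ q * ∑ l ∈ s, c l * (ξ * z) ^ l
      = d * ∑ l ∈ s, if l % d = q then c l * z ^ l else 0 := by
  simp_rw [mul_sum]
  rw [sum_comm]
  refine sum_congr rfl fun l _ => ?_
  have hterm : ∀ ξ : K, ξ⁻¹ ^ q * (c l * (ξ * z) ^ l) = c l * z ^ l * (ξ⁻¹ ^ q * ξ ^ l) :=
    fun ξ => by ring
  rw [sum_congr rfl fun ξ _ => hterm ξ, ← mul_sum, hζ.sum_nthRootsFinset_one_inv_pow_mul_pow hq]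
  split_ifs <;> ring

end RootsOfUnity

theorem div_one_sub_sq_eq {K : Type*} [Field K] {w : K} (hw : w ≠ 1) (c p : K) :
    (1 + (w - 1) * c + (w - 1) ^ 2 * p) / (1 - w) ^ 2 = ((1 - w)⁻¹) ^ 2 - c * (1 - w)⁻¹ + p := by
  have : 1 - w ≠ 0 := sub_ne_zero.2 hw.symm
  field_simp
  ring

theorem tendsto_sub_mul_ofReal_atTop_cobounded {𝕜 : Type*} [RCLike 𝕜] {ξ : 𝕜} (hξ : ξ ≠ 0)
    (c : 𝕜) : Tendsto (fun x : ℝ => c - ξ * x) atTop (cobounded 𝕜) :=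
  (tendsto_const_sub_cobounded c).comp <|
    (tendsto_mul_left_cobounded hξ).comp (RCLike.tendsto_ofReal_atTop_cobounded 𝕜)

theorem stmt18_general (d q : ℕ) (hq : q < d)
    (Δ : Polynomial ℂ) (m : ℤ) (a : ℕ →₀ ℤ)
    -- `Δ(t) = 1 + (t-1)·m + (t-1)² Σ_l a_l t^l`
    (hΔ : Δ = 1 + (Polynomial.X - 1) * Polynomial.C ((m : ℂ))
        + (Polynomial.X - 1) ^ 2 * ∑ l ∈ a.support, Polynomial.C ((a l : ℂ)) * Polynomial.X ^ l) :
    -- the polynomial part of `H(t) = (1/d) Σ_{ξ^d=1} ξ^{-q} Δ(ξt)/(1-ξt)²` is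
    -- `Σ_l a_{q+ld} t^{q+ld}`, i.e. their difference tends to `0` at infinity
    Filter.Tendsto
      (fun x : ℝ =>
        (1 / (d : ℂ)) * ∑ ξ ∈ (Polynomial.nthRoots d (1 : ℂ)).toFinset,
            ξ⁻¹ ^ q * Δ.eval (ξ * (x : ℂ)) / (1 - ξ * (x : ℂ)) ^ 2
          - ∑ l ∈ a.support, if l % d = q then (a l : ℂ) * (x : ℂ) ^ l else 0)
      Filter.atTop (nhds 0) := by
  have hζ := Complex.isPrimitiveRoot_exp d (by omega)
  simp only [← nthRootsFinset_def]
  set R := nthRootsFinset d (1 : ℂ)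
  set tail : ℂ → ℂ := fun w => ((1 - w)⁻¹) ^ 2 - m * (1 - w)⁻¹
  have hfar : ∀ ξ ∈ R, Tendsto (fun x : ℝ => 1 - ξ * x) atTop (cobounded ℂ) := fun ξ hξ =>
    tendsto_sub_mul_ofReal_atTop_cobounded (ne_zero_of_mem_nthRootsFinset one_ne_zero hξ) 1
  have hsplit : ∀ᶠ x : ℝ in atTop, (1 / (d : ℂ)) * ∑ ξ ∈ R, ξ⁻¹ ^ q * tail (ξ * x)
      = (1 / (d : ℂ)) * ∑ ξ ∈ R, ξ⁻¹ ^ q * Δ.eval (ξ * (x : ℂ)) / (1 - ξ * (x : ℂ)) ^ 2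
          - ∑ l ∈ a.support, (if l % d = q then (a l : ℂ) * (x : ℂ) ^ l else 0) := by
    filter_upwards [(eventually_all_finset R).2 fun ξ hξ => (hfar ξ hξ).eventually_ne_cobounded 0]
      with x hx
    have hterm : ∀ ξ ∈ R, ξ⁻¹ ^ q * Δ.eval (ξ * (x : ℂ)) / (1 - ξ * (x : ℂ)) ^ 2
        = ξ⁻¹ ^ q * tail (ξ * x) + ξ⁻¹ ^ q * ∑ l ∈ a.support, (a l : ℂ) * (ξ * x) ^ l := by
      intro ξ hξ
      rw [mul_div_assoc, ← mul_add, hΔ]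
      simp only [eval_add, eval_mul, eval_pow, eval_sub, eval_X, eval_one, eval_C, eval_finsetSum]
      rw [div_one_sub_sq_eq (fun h => hx ξ hξ (by rw [h, sub_self]))]
    have hd : (d : ℂ) ≠ 0 := Nat.cast_ne_zero.2 (by omega)
    rw [sum_congr rfl hterm, sum_add_distrib, hζ.sum_nthRootsFinset_one_inv_pow_mul_sum hq,
      mul_add, ← mul_assoc, one_div_mul_cancel hd, one_mul, add_sub_cancel_right]
  refine Tendsto.congr' hsplit ?_
  have htail : ∀ ξ ∈ R, Tendsto (fun x : ℝ => ξ⁻¹ ^ q * tail (ξ * x)) atTop (nhds 0) := by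
    intro ξ hξ
    have h := tendsto_inv₀_cobounded.comp (hfar ξ hξ)
    simpa [tail] using ((h.pow 2).sub (h.const_mul (m : ℂ))).const_mul (ξ⁻¹ ^ q)
  simpa using (tendsto_finsetSum R htail).const_mul (1 / (d : ℂ))

theorem stmt18 (d q : ℕ) (hd : 1 ≤ d) (hq : q < d)
    (Δ : Polynomial ℂ) (m : ℤ) (a : ℕ →₀ ℤ)
    -- `Δ(t) = 1 + (t-1)·m + (t-1)² Σ_l a_l t^l`
    (hΔ : Δ = 1 + (Polynomial.X - 1) * Polynomial.C ((m : ℂ))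
        + (Polynomial.X - 1) ^ 2 * ∑ l ∈ a.support, Polynomial.C ((a l : ℂ)) * Polynomial.X ^ l) :
    -- the polynomial part of `H(t) = (1/d) Σ_{ξ^d=1} ξ^{-q} Δ(ξt)/(1-ξt)²` is
    -- `Σ_l a_{q+ld} t^{q+ld}`, i.e. their difference tends to `0` at infinity
    Filter.Tendsto
      (fun x : ℝ =>
        (1 / (d : ℂ)) * ∑ ξ ∈ (Polynomial.nthRoots d (1 : ℂ)).toFinset,
            ξ⁻¹ ^ q * Δ.eval (ξ * (x : ℂ)) / (1 - ξ * (x : ℂ)) ^ 2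
          - ∑ l ∈ a.support, if l % d = q then (a l : ℂ) * (x : ℂ) ^ l else 0)
      Filter.atTop (nhds 0) :=
  stmt18_general d q hq Δ m a hΔ
end
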